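/- arXiv:2107.12906 — 3 statements merged into one kernel-verified Lean document; each statement's English description precedes it below -/
import Mathlib

section
/- For every L > 0, the following two statements are equivalent: (1) there exist T ∈ ℕ and N ∈ ℕ such that U^T f^{n,L} is a consensus for every n ≥ N; (2) there exists T' ∈ ℕ such that U^{T'} f^L is a consensus. -/
open MeasureTheory Set

/-- The neighbourhood `N_α(f)` of an agent `α ∈ [0,1]`:
all agents `β ∈ [0,1]` whose opinion is within distance 1 of that of `α`. -/
def nbhdHK (f : ℝ → ℝ) (α : ℝ) : Set ℝ :=
  {β | β ∈ Icc (0:ℝ) 1 ∧ |f β - f α| ≤ 1}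

/-- The Hegselmann–Krause updating operator `U`:
`Uf(α)` is the average of `f` over `N_α(f)` if that set has positive Lebesgue
measure, and `f(α)` otherwise. -/
noncomputable def updateHK (f : ℝ → ℝ) (α : ℝ) : ℝ :=
  if 0 < (volume (nbhdHK f α)).toReal then
    (∫ β in nbhdHK f α, f β) / (volume (nbhdHK f α)).toReal
  else f α

/-- The canonical equally spaced profile on `n` agents with diameter `L`:
it takes the value `(i-1)·L/(n-1)` on `((i-1)/n, i/n]` for `i = 2, …, n`,
and the value `0` on `[0, 1/n]`. -/
noncomputable def eqSpacedHK (n : ℕ) (L : ℝ) : ℝ → ℝ :=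
  fun α => if α ≤ 1 / n then 0 else ((⌈α * n⌉ : ℝ) - 1) * L / ((n : ℝ) - 1)

/-- A consensus: a profile that is constant on `[0,1]`. -/
def IsConsensusHK (g : ℝ → ℝ) : Prop :=
  ∀ α ∈ Icc (0:ℝ) 1, ∀ β ∈ Icc (0:ℝ) 1, g α = g β

/-!
The iterates `g = U^t f^L` satisfy `IsRegularProfile g (L/2)`: they are monotone, continuous,
symmetric about `L/2`, and every level set of `g` of positive measure lies at distance `< 1`
from all values of `g`. This invariant propagates because a plateau of `U g` can only come from
agents whose neighbourhood is all of `[0,1]`. For such `g` the level sets `{g = g α ± 1}` are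
null, so the neighbourhoods of a monotone profile uniformly close to `g` are squeezed between two
sets of almost equal measure, and `U` is continuous at `g` for uniform convergence of monotone
profiles. Since `f^{n,L} → f^L` uniformly, `U^t f^{n,L} → U^t f^L` uniformly for every `t`.
A consensus of the discrete iterates therefore passes to the limit; conversely, if `U^T f^L` is
a consensus, then for large `n` the profile `U^T f^{n,L}` has oscillation at most `1`, and one
more step makes it a consensus.
-/

open Filter Topology
open scoped ENNReal

namespace HK

section SetAverage

variable {X : Type*} [MeasurableSpace X] {μ : Measure X} {s t : Set X} {f g : X → ℝ} {v : ℝ}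

lemma setAverage_le_of_forall_le (hs₀ : μ s ≠ 0) (hs : μ s ≠ ∞) (hf : IntegrableOn f s μ)
    (h : ∀ x ∈ s, f x ≤ v) : ⨍ x in s, f x ∂μ ≤ v :=
  let ⟨x, hx, hle⟩ := exists_setAverage_le hs₀ hs hf
  hle.trans (h x hx)

lemma le_setAverage_of_forall_le (hs₀ : μ s ≠ 0) (hs : μ s ≠ ∞) (hf : IntegrableOn f s μ)
    (h : ∀ x ∈ s, v ≤ f x) : v ≤ ⨍ x in s, f x ∂μ :=
  let ⟨x, hx, hle⟩ := exists_le_setAverage hs₀ hs hf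
  (h x hx).trans hle

lemma setAverage_lt_of_forall_le (hs₀ : μ s ≠ 0) (hs : μ s ≠ ∞) (hf : IntegrableOn f s μ)
    (h : ∀ x ∈ s, f x ≤ v) (hv : μ {x ∈ s | f x = v} = 0) : ⨍ x in s, f x ∂μ < v := by
  refine lt_of_not_ge fun hle => (measure_setAverage_le_pos hs₀ hs hf).ne' ?_
  exact measure_mono_null (fun x hx =>
    show x ∈ {x ∈ s | f x = v} from ⟨hx.1, le_antisymm (h x hx.1) (hle.trans hx.2)⟩) hv

lemma lt_setAverage_of_forall_le (hs₀ : μ s ≠ 0) (hs : μ s ≠ ∞) (hf : IntegrableOn f s μ)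
    (h : ∀ x ∈ s, v ≤ f x) (hv : μ {x ∈ s | f x = v} = 0) : v < ⨍ x in s, f x ∂μ := by
  refine lt_of_not_ge fun hle => (measure_le_setAverage_pos hs₀ hs hf).ne' ?_
  exact measure_mono_null (fun x hx =>
    show x ∈ {x ∈ s | f x = v} from ⟨hx.1, le_antisymm (hx.2.trans hle) (h x hx.1)⟩) hv

lemma abs_setAverage_sub_le (hs₀ : μ s ≠ 0) (hs : μ s ≠ ∞) (hf : IntegrableOn f s μ) {y M : ℝ}
    (h : ∀ x ∈ s, |f x - y| ≤ M) : |⨍ x in s, f x ∂μ - y| ≤ M := by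
  rw [abs_sub_le_iff, sub_le_iff_le_add, sub_le_comm]
  exact ⟨setAverage_le_of_forall_le hs₀ hs hf fun x hx => by linarith [(abs_le.1 (h x hx)).2],
    le_setAverage_of_forall_le hs₀ hs hf fun x hx => by linarith [(abs_le.1 (h x hx)).1]⟩

lemma abs_setAverage_sub_setAverage_le (hs₀ : μ s ≠ 0) (hs : μ s ≠ ∞)
    (hf : IntegrableOn f s μ) (hg : IntegrableOn g s μ) {ε : ℝ} (h : ∀ x ∈ s, |f x - g x| ≤ ε) :
    |⨍ x in s, f x ∂μ - ⨍ x in s, g x ∂μ| ≤ ε := by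
  have hsub : ⨍ x in s, f x ∂μ - ⨍ x in s, g x ∂μ = ⨍ x in s, (f x - g x) ∂μ := by
    simp only [setAverage_eq, ← smul_sub, integral_sub hf hg]
  simpa [hsub] using abs_setAverage_sub_le hs₀ hs (hf.sub hg) (y := 0) (by simpa using h)

lemma abs_setAverage_sub_setAverage_le_of_subset (hst : s ⊆ t) (hs : NullMeasurableSet s μ)
    (ht : NullMeasurableSet t μ) (hs₀ : μ s ≠ 0) (htμ : μ t ≠ ∞) (hf : IntegrableOn f t μ)
    {y M : ℝ} (hM : ∀ x ∈ t, |f x - y| ≤ M) :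
    |⨍ x in t, f x ∂μ - ⨍ x in s, f x ∂μ| ≤ 2 * M * μ.real (t \ s) / μ.real s := by
  have hsμ : μ s ≠ ∞ := measure_ne_top_of_subset hst htμ
  have hdμ : μ (t \ s) ≠ ∞ := measure_ne_top_of_subset sdiff_subset htμ
  obtain ⟨x₀, hx₀⟩ := nonempty_of_measure_ne_zero hs₀
  have hM₀ : 0 ≤ M := (abs_nonneg _).trans (hM x₀ (hst hx₀))
  rw [← union_sdiff_cancel hst, average_union disjoint_sdiff_right.aedisjoint (ht.diff hs) hsμ hdμ
    (hf.mono_set hst) (hf.mono_set sdiff_subset), union_sdiff_cancel hst, smul_eq_mul, smul_eq_mul]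
  set a := ⨍ x in s, f x ∂μ
  set b := ⨍ x in t \ s, f x ∂μ
  set p := μ.real s
  set q := μ.real (t \ s)
  have hp : 0 < p := ENNReal.toReal_pos hs₀ hsμ
  have hq : 0 ≤ q := measureReal_nonneg
  have hab : q * |b - a| ≤ q * (2 * M) := by
    rcases eq_or_ne (μ (t \ s)) 0 with hd₀ | hd₀
    · simp [q, measureReal_def, hd₀]
    refine mul_le_mul_of_nonneg_left ?_ hq
    calc |b - a| ≤ |b - y| + |a - y| := by simpa [abs_sub_comm y a] using abs_sub_le b y a
      _ ≤ M + M := add_le_add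
          (abs_setAverage_sub_le hd₀ hdμ (hf.mono_set sdiff_subset) fun x hx => hM x hx.1)
          (abs_setAverage_sub_le hs₀ hsμ (hf.mono_set hst) fun x hx => hM x (hst hx))
      _ = 2 * M := by ring
  have hsplit : p / (p + q) * a + q / (p + q) * b - a = q * (b - a) / (p + q) := by
    field_simp
    ring
  rw [hsplit, abs_div, abs_mul, abs_of_nonneg hq, abs_of_pos (show 0 < p + q by linarith)]
  calc q * |b - a| / (p + q) ≤ q * (2 * M) / (p + q) := by gcongr
    _ ≤ q * (2 * M) / p := by gcongr; linarith
    _ = 2 * M * q / p := by ring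

lemma setAverage_const_sub (hs₀ : μ s ≠ 0) (hs : μ s ≠ ∞) (hf : IntegrableOn f s μ) (a : ℝ) :
    ⨍ x in s, (a - f x) ∂μ = a - ⨍ x in s, f x ∂μ := by
  have hs₀' : μ.real s ≠ 0 := (ENNReal.toReal_pos hs₀ hs).ne'
  rw [setAverage_eq, setAverage_eq, integral_sub (integrableOn_const (C := a) hs) hf,
    setIntegral_const, smul_sub, smul_smul, inv_mul_cancel₀ hs₀', one_smul]

lemma measure_sep_eq_zero_of_subset {p : X → Prop} (hst : s ⊆ t) (h : μ {x ∈ t | p x} = 0) :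
    μ {x ∈ s | p x} = 0 :=
  measure_mono_null (show {x ∈ s | p x} ⊆ {x ∈ t | p x} from fun _ hx => ⟨hst hx.1, hx.2⟩) h

lemma ae_eq_inter_of_measure_sdiff_eq_zero (h : μ (s \ t) = 0) : s =ᵐ[μ] (s ∩ t : Set X) :=
  ae_eq_set.2 ⟨by rwa [sdiff_self_inter], by rw [sdiff_eq_empty.2 inter_subset_left, measure_empty]⟩

lemma setAverage_le_setAverage_inter (hs : NullMeasurableSet s μ) (ht : NullMeasurableSet t μ)
    (hsμ : μ s ≠ ∞) (hf : IntegrableOn f s μ) (h : ∀ x ∈ s \ t, f x ≤ v)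
    (hv : v ≤ ⨍ x in s ∩ t, f x ∂μ) : ⨍ x in s, f x ∂μ ≤ ⨍ x in s ∩ t, f x ∂μ := by
  rcases eq_or_ne (μ (s \ t)) 0 with h₀ | h₀
  · rw [setAverage_congr (ae_eq_inter_of_measure_sdiff_eq_zero h₀)]
  have hsub : s \ t ⊆ s := sdiff_subset
  have hA := setAverage_le_of_forall_le h₀ (measure_ne_top_of_subset hsub hsμ) (hf.mono_set hsub) h
  conv_lhs => rw [← sdiff_union_inter s t]
  exact (segment_subset_Icc (hA.trans hv)
    (average_union_mem_segment disjoint_sdiff_inter.aedisjoint (hs.inter ht)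
      (measure_ne_top_of_subset hsub hsμ) (measure_ne_top_of_subset inter_subset_left hsμ)
      (hf.mono_set hsub) (hf.mono_set inter_subset_left))).2

lemma setAverage_lt_setAverage_inter (hs : NullMeasurableSet s μ) (ht : NullMeasurableSet t μ)
    (hsμ : μ s ≠ ∞) (hf : IntegrableOn f s μ) (h₀ : μ (s \ t) ≠ 0) (h₀' : μ (s ∩ t) ≠ 0)
    (h : ∀ x ∈ s \ t, f x ≤ v) (hv : v < ⨍ x in s ∩ t, f x ∂μ) :
    ⨍ x in s, f x ∂μ < ⨍ x in s ∩ t, f x ∂μ := by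
  have hsub : s \ t ⊆ s := sdiff_subset
  have hA := setAverage_le_of_forall_le h₀ (measure_ne_top_of_subset hsub hsμ) (hf.mono_set hsub) h
  conv_lhs => rw [← sdiff_union_inter s t]
  exact (openSegment_subset_Ioo (hA.trans_lt hv)
    (average_union_mem_openSegment disjoint_sdiff_inter.aedisjoint (hs.inter ht) h₀ h₀'
      (measure_ne_top_of_subset hsub hsμ) (measure_ne_top_of_subset inter_subset_left hsμ)
      (hf.mono_set hsub) (hf.mono_set inter_subset_left))).2

lemma setAverage_inter_le_setAverage (hs : NullMeasurableSet s μ) (ht : NullMeasurableSet t μ)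
    (hsμ : μ s ≠ ∞) (hf : IntegrableOn f s μ) (h : ∀ x ∈ s \ t, v ≤ f x)
    (hv : ⨍ x in s ∩ t, f x ∂μ ≤ v) : ⨍ x in s ∩ t, f x ∂μ ≤ ⨍ x in s, f x ∂μ := by
  simpa [average_neg] using setAverage_le_setAverage_inter hs ht hsμ hf.neg (v := -v)
    (fun x hx => neg_le_neg (h x hx)) (by simpa [average_neg] using hv)

lemma setAverage_inter_lt_setAverage (hs : NullMeasurableSet s μ) (ht : NullMeasurableSet t μ)
    (hsμ : μ s ≠ ∞) (hf : IntegrableOn f s μ) (h₀ : μ (s \ t) ≠ 0) (h₀' : μ (s ∩ t) ≠ 0)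
    (h : ∀ x ∈ s \ t, v ≤ f x) (hv : ⨍ x in s ∩ t, f x ∂μ < v) :
    ⨍ x in s ∩ t, f x ∂μ < ⨍ x in s, f x ∂μ := by
  simpa [average_neg] using setAverage_lt_setAverage_inter hs ht hsμ hf.neg h₀ h₀' (v := -v)
    (fun x hx => neg_le_neg (h x hx)) (by simpa [average_neg] using hv)

end SetAverage

section Neighbourhood

variable {f g : ℝ → ℝ} {α α' β : ℝ} {s : Set ℝ}

lemma measurableSet_Icc_sep (hf : MonotoneOn f (Icc 0 1)) {p : ℝ → Prop}
    (hp : MeasurableSet {y | p y}) : MeasurableSet {β ∈ Icc (0:ℝ) 1 | p (f β)} := by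
  have hF : Measurable (IccExtend zero_le_one (f ∘ Subtype.val : Icc (0:ℝ) 1 → ℝ)) :=
    (hf.monotone.IccExtend zero_le_one).measurable
  convert measurableSet_Icc.inter (hF hp) using 1
  ext β
  simp only [mem_inter_iff, mem_preimage, mem_ofPred_eq]
  exact and_congr_right fun hβ => by rw [IccExtend_of_mem _ _ hβ]; rfl

lemma measurableSet_nbhdHK (hf : MonotoneOn f (Icc 0 1)) (α : ℝ) :
    MeasurableSet (nbhdHK f α) :=
  measurableSet_Icc_sep hf (p := fun y => |y - f α| ≤ 1)
    (measurableSet_le (by fun_prop) measurable_const)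

lemma nbhdHK_subset_Icc (f : ℝ → ℝ) (α : ℝ) : nbhdHK f α ⊆ Icc 0 1 := fun _ hβ => hβ.1

lemma volume_ne_top_of_subset_Icc (hs : s ⊆ Icc 0 1) : volume s ≠ ∞ :=
  measure_ne_top_of_subset hs (by simp)

lemma integrableOn_of_subset_Icc (hf : MonotoneOn f (Icc 0 1)) (hs : s ⊆ Icc 0 1) :
    IntegrableOn f s :=
  (hf.integrableOn_isCompact isCompact_Icc).mono_set hs

lemma updateHK_eq_setAverage (h : volume (nbhdHK f α) ≠ 0) :
    updateHK f α = ⨍ β in nbhdHK f α, f β := by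
  rw [updateHK, if_pos (ENNReal.toReal_pos h (volume_ne_top_of_subset_Icc (nbhdHK_subset_Icc f α))),
    setAverage_eq, smul_eq_mul, measureReal_def, div_eq_inv_mul]

lemma nbhdHK_eq_Icc (h : ∀ β ∈ Icc (0:ℝ) 1, |f β - f α| ≤ 1) : nbhdHK f α = Icc 0 1 :=
  subset_antisymm (nbhdHK_subset_Icc f α) fun β hβ => ⟨hβ, h β hβ⟩

lemma updateHK_of_nbhdHK_eq_Icc (h : nbhdHK f α = Icc 0 1) :
    updateHK f α = ⨍ β in Icc 0 1, f β := by
  rw [updateHK_eq_setAverage (by simp [h]), h]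

lemma isConsensusHK_updateHK (h : ∀ α ∈ Icc (0:ℝ) 1, ∀ β ∈ Icc (0:ℝ) 1, |f α - f β| ≤ 1) :
    IsConsensusHK (updateHK f) := fun α hα β hβ => by
  rw [updateHK_of_nbhdHK_eq_Icc (nbhdHK_eq_Icc fun γ hγ => h γ hγ α hα),
    updateHK_of_nbhdHK_eq_Icc (nbhdHK_eq_Icc fun γ hγ => h γ hγ β hβ)]

lemma lt_sub_one_of_mem_nbhdHK_sdiff (hle : f α ≤ f α') (hβ : β ∈ nbhdHK f α \ nbhdHK f α') :
    f β < f α' - 1 := by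
  obtain ⟨⟨hβI, hβα⟩, hβα'⟩ := hβ
  by_contra! hlt
  exact hβα' ⟨hβI, abs_le.2 ⟨by linarith, by linarith [(abs_le.1 hβα).2]⟩⟩

lemma add_one_lt_of_mem_nbhdHK_sdiff (hle : f α ≤ f α') (hβ : β ∈ nbhdHK f α' \ nbhdHK f α) :
    f α + 1 < f β := by
  obtain ⟨⟨hβI, hβα'⟩, hβα⟩ := hβ
  by_contra! hlt
  exact hβα ⟨hβI, abs_le.2 ⟨by linarith [(abs_le.1 hβα').1], by linarith⟩⟩

end Neighbourhood

section Positivity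

variable {f g : ℝ → ℝ} {α x y u v : ℝ}

lemma volume_ne_zero_of_mem_nhdsWithin_Icc {a b γ : ℝ} {S : Set ℝ} (hab : a < b)
    (hγ : γ ∈ Icc a b) (hS : S ∈ 𝓝[Icc a b] γ) : volume S ≠ 0 := by
  obtain ⟨U, hU, hγU, hUS⟩ := mem_nhdsWithin.1 hS
  obtain ⟨z, hz⟩ := mem_closure_iff.1 (by rwa [closure_Ioo hab.ne]) U hU hγU
  refine fun h0 => ((hU.inter isOpen_Ioo).measure_pos volume ⟨z, hz⟩).ne' ?_
  exact measure_mono_null (fun w (hw : w ∈ U ∩ Ioo a b) => hUS ⟨hw.1, Ioo_subset_Icc_self hw.2⟩) h0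

lemma exists_mem_between {s : Set ℝ} (hs : s.OrdConnected) (hgc : ContinuousOn g s)
    (hx : x ∈ s) (hy : y ∈ s) (hxv : g x < v) (huy : u < g y) (huv : u < v) :
    ∃ γ ∈ s, u < g γ ∧ g γ < v := by
  rcases lt_or_ge u (g x) with hux | hxu
  · exact ⟨x, hx, hux, hxv⟩
  rcases lt_or_ge (g y) v with hyv | hvy
  · exact ⟨y, hy, huy, hyv⟩
  obtain ⟨γ, hγ, hγv⟩ := intermediate_value_uIcc (hgc.mono (hs.uIcc_subset hx hy))
    (mem_uIcc_of_le (by linarith : g x ≤ (u + v) / 2) (by linarith : (u + v) / 2 ≤ g y))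
  exact ⟨γ, hs.uIcc_subset hx hy hγ, by linarith, by linarith⟩

lemma volume_Icc_sep_ne_zero (hgc : ContinuousOn g (Icc 0 1)) (hx : x ∈ Icc (0:ℝ) 1)
    (hy : y ∈ Icc (0:ℝ) 1) (hxv : g x < v) (huy : u < g y) (huv : u < v) :
    volume {β ∈ Icc (0:ℝ) 1 | u < g β ∧ g β < v} ≠ 0 := by
  obtain ⟨γ, hγ, hu, hv⟩ := exists_mem_between ordConnected_Icc hgc hx hy hxv huy huv
  refine volume_ne_zero_of_mem_nhdsWithin_Icc zero_lt_one hγ ?_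
  filter_upwards [self_mem_nhdsWithin, hgc γ hγ (Ioo_mem_nhds hu hv)] with β hβ hβ'
  exact ⟨hβ, hβ'⟩

lemma volume_nbhdHK_ne_zero (hgc : ContinuousOn g (Icc 0 1))
    (hfg : ∀ x ∈ Icc (0:ℝ) 1, |f x - g x| ≤ 1 / 4) (hα : α ∈ Icc (0:ℝ) 1) :
    volume (nbhdHK f α) ≠ 0 := by
  refine fun h0 => volume_Icc_sep_ne_zero hgc (u := g α - 1 / 2) (v := g α + 1 / 2) hα hα
    (by linarith) (by linarith) (by linarith) (measure_mono_null ?_ h0)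
  rintro β ⟨hβ, h₁, h₂⟩
  have e₁ := abs_le.1 (hfg β hβ)
  have e₂ := abs_le.1 (hfg α hα)
  exact ⟨hβ, abs_le.2 ⟨by linarith, by linarith⟩⟩

end Positivity

section Comparison

variable {f g : ℝ → ℝ} {α α' : ℝ}

lemma setAverage_nbhdHK_le_setAverage_inter (hf : MonotoneOn f (Icc 0 1)) (hle : f α ≤ f α')
    (hC : volume (nbhdHK f α ∩ nbhdHK f α') ≠ 0) :
    ⨍ β in nbhdHK f α, f β ≤ ⨍ β in nbhdHK f α ∩ nbhdHK f α', f β := by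
  have hNI := nbhdHK_subset_Icc f α
  have hCI : nbhdHK f α ∩ nbhdHK f α' ⊆ Icc 0 1 := inter_subset_left.trans hNI
  refine setAverage_le_setAverage_inter (measurableSet_nbhdHK hf α).nullMeasurableSet
    (measurableSet_nbhdHK hf α').nullMeasurableSet (volume_ne_top_of_subset_Icc hNI)
    (integrableOn_of_subset_Icc hf hNI) (fun β hβ => (lt_sub_one_of_mem_nbhdHK_sdiff hle hβ).le) ?_
  exact le_setAverage_of_forall_le hC (volume_ne_top_of_subset_Icc hCI)
    (integrableOn_of_subset_Icc hf hCI) fun β hβ => by linarith [(abs_le.1 hβ.2.2).1]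

lemma setAverage_nbhdHK_lt_setAverage_inter (hf : MonotoneOn f (Icc 0 1)) (hle : f α ≤ f α')
    (hC : volume (nbhdHK f α ∩ nbhdHK f α') ≠ 0) (hA : volume (nbhdHK f α \ nbhdHK f α') ≠ 0)
    (hc : f α' - 1 < ⨍ β in nbhdHK f α ∩ nbhdHK f α', f β) :
    ⨍ β in nbhdHK f α, f β < ⨍ β in nbhdHK f α ∩ nbhdHK f α', f β :=
  setAverage_lt_setAverage_inter (measurableSet_nbhdHK hf α).nullMeasurableSet
    (measurableSet_nbhdHK hf α').nullMeasurableSet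
    (volume_ne_top_of_subset_Icc (nbhdHK_subset_Icc f α))
    (integrableOn_of_subset_Icc hf (nbhdHK_subset_Icc f α)) hA hC
    (fun _ hβ => (lt_sub_one_of_mem_nbhdHK_sdiff hle hβ).le) hc

lemma setAverage_inter_le_setAverage_nbhdHK (hf : MonotoneOn f (Icc 0 1)) (hle : f α ≤ f α')
    (hC : volume (nbhdHK f α ∩ nbhdHK f α') ≠ 0) :
    ⨍ β in nbhdHK f α ∩ nbhdHK f α', f β ≤ ⨍ β in nbhdHK f α', f β := by
  have hNI := nbhdHK_subset_Icc f α'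
  have hCI : nbhdHK f α' ∩ nbhdHK f α ⊆ Icc 0 1 := inter_subset_left.trans hNI
  rw [inter_comm] at hC ⊢
  refine setAverage_inter_le_setAverage (measurableSet_nbhdHK hf α').nullMeasurableSet
    (measurableSet_nbhdHK hf α).nullMeasurableSet (volume_ne_top_of_subset_Icc hNI)
    (integrableOn_of_subset_Icc hf hNI)
    (fun β hβ => (add_one_lt_of_mem_nbhdHK_sdiff hle hβ).le) ?_
  exact setAverage_le_of_forall_le hC (volume_ne_top_of_subset_Icc hCI)
    (integrableOn_of_subset_Icc hf hCI) fun β hβ => by linarith [(abs_le.1 hβ.2.2).2]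

lemma setAverage_inter_lt_setAverage_nbhdHK (hf : MonotoneOn f (Icc 0 1)) (hle : f α ≤ f α')
    (hC : volume (nbhdHK f α ∩ nbhdHK f α') ≠ 0) (hB : volume (nbhdHK f α' \ nbhdHK f α) ≠ 0)
    (hc : ⨍ β in nbhdHK f α ∩ nbhdHK f α', f β < f α + 1) :
    ⨍ β in nbhdHK f α ∩ nbhdHK f α', f β < ⨍ β in nbhdHK f α', f β := by
  rw [inter_comm] at hC hc ⊢
  exact setAverage_inter_lt_setAverage (measurableSet_nbhdHK hf α').nullMeasurableSet
    (measurableSet_nbhdHK hf α).nullMeasurableSet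
    (volume_ne_top_of_subset_Icc (nbhdHK_subset_Icc f α'))
    (integrableOn_of_subset_Icc hf (nbhdHK_subset_Icc f α')) hB hC
    (fun _ hβ => (add_one_lt_of_mem_nbhdHK_sdiff hle hβ).le) hc

theorem updateHK_le_updateHK (hf : MonotoneOn f (Icc 0 1)) (hle : f α ≤ f α')
    (h₀ : volume (nbhdHK f α) ≠ 0) (h₀' : volume (nbhdHK f α') ≠ 0) :
    updateHK f α ≤ updateHK f α' := by
  rw [updateHK_eq_setAverage h₀, updateHK_eq_setAverage h₀']
  rcases ne_or_eq (volume (nbhdHK f α ∩ nbhdHK f α')) 0 with hC | hC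
  · exact (setAverage_nbhdHK_le_setAverage_inter hf hle hC).trans
      (setAverage_inter_le_setAverage_nbhdHK hf hle hC)
  have hNA : nbhdHK f α =ᵐ[volume] (nbhdHK f α \ nbhdHK f α' : Set ℝ) :=
    (sdiff_ae_eq_self.2 hC).symm
  have hAI : nbhdHK f α \ nbhdHK f α' ⊆ Icc 0 1 := sdiff_subset.trans (nbhdHK_subset_Icc f α)
  have hN'I := nbhdHK_subset_Icc f α'
  calc ⨍ β in nbhdHK f α, f β = ⨍ β in nbhdHK f α \ nbhdHK f α', f β := setAverage_congr hNA
    _ ≤ f α' - 1 := setAverage_le_of_forall_le (by rwa [← measure_congr hNA])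
        (volume_ne_top_of_subset_Icc hAI) (integrableOn_of_subset_Icc hf hAI)
        fun β hβ => (lt_sub_one_of_mem_nbhdHK_sdiff hle hβ).le
    _ ≤ ⨍ β in nbhdHK f α', f β := le_setAverage_of_forall_le h₀'
        (volume_ne_top_of_subset_Icc hN'I) (integrableOn_of_subset_Icc hf hN'I)
        fun β hβ => by linarith [(abs_le.1 hβ.2).1]

lemma updateHK_lt_add_one (hg : MonotoneOn g (Icc 0 1)) (h₀ : volume (nbhdHK g α) ≠ 0)
    (hnull : volume {β ∈ Icc (0:ℝ) 1 | g β = g α + 1} = 0) : updateHK g α < g α + 1 := by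
  have hNI := nbhdHK_subset_Icc g α
  rw [updateHK_eq_setAverage h₀]
  exact setAverage_lt_of_forall_le h₀ (volume_ne_top_of_subset_Icc hNI)
    (integrableOn_of_subset_Icc hg hNI) (fun β hβ => by linarith [(abs_le.1 hβ.2).2])
    (measure_sep_eq_zero_of_subset hNI hnull)

lemma sub_one_lt_updateHK (hg : MonotoneOn g (Icc 0 1)) (h₀ : volume (nbhdHK g α) ≠ 0)
    (hnull : volume {β ∈ Icc (0:ℝ) 1 | g β = g α - 1} = 0) : g α - 1 < updateHK g α := by
  have hNI := nbhdHK_subset_Icc g α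
  rw [updateHK_eq_setAverage h₀]
  exact lt_setAverage_of_forall_le h₀ (volume_ne_top_of_subset_Icc hNI)
    (integrableOn_of_subset_Icc hg hNI) (fun β hβ => by linarith [(abs_le.1 hβ.2).1])
    (measure_sep_eq_zero_of_subset hNI hnull)

lemma updateHK_mem_Icc (hg : MonotoneOn g (Icc 0 1)) (h₀ : volume (nbhdHK g α) ≠ 0) :
    updateHK g α ∈ Icc (g 0) (g 1) := by
  have hNI := nbhdHK_subset_Icc g α
  rw [updateHK_eq_setAverage h₀]
  exact ⟨le_setAverage_of_forall_le h₀ (volume_ne_top_of_subset_Icc hNI)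
      (integrableOn_of_subset_Icc hg hNI) fun x hx => hg ⟨le_rfl, zero_le_one⟩ hx.1 hx.1.1,
    setAverage_le_of_forall_le h₀ (volume_ne_top_of_subset_Icc hNI)
      (integrableOn_of_subset_Icc hg hNI) fun x hx => hg hx.1 ⟨zero_le_one, le_rfl⟩ hx.1.2⟩

lemma sub_lt_two_of_nbhdHK_eq_Icc (ha : nbhdHK g α = Icc 0 1) (hb : nbhdHK g α' = Icc 0 1)
    (hlt : g α < g α') : g 1 - g 0 < 2 := by
  have h₁ : (1:ℝ) ∈ nbhdHK g α := ha ▸ ⟨zero_le_one, le_rfl⟩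
  have h₀ : (0:ℝ) ∈ nbhdHK g α' := hb ▸ ⟨le_rfl, zero_le_one⟩
  linarith [(abs_le.1 h₁.2).2, (abs_le.1 h₀.2).1]

lemma nbhdHK_eq_Icc_of_volume_sdiff_eq_zero (hg : MonotoneOn g (Icc 0 1))
    (hgc : ContinuousOn g (Icc 0 1)) (hα : α ∈ Icc (0:ℝ) 1) (hα' : α' ∈ Icc (0:ℝ) 1)
    (hlt : g α < g α') (hnear : g α' - g α < 2)
    (hA : volume (nbhdHK g α \ nbhdHK g α') = 0) (hB : volume (nbhdHK g α' \ nbhdHK g α) = 0) :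
    nbhdHK g α = Icc 0 1 ∧ nbhdHK g α' = Icc 0 1 := by
  have h0 : g α' - 1 ≤ g 0 := by
    by_contra! h
    refine volume_Icc_sep_ne_zero hgc (u := g α - 1) (v := g α' - 1) ⟨le_rfl, zero_le_one⟩ hα h
      (by linarith) (by linarith) (measure_mono_null ?_ hA)
    rintro β ⟨hβ, h₁, h₂⟩
    exact ⟨⟨hβ, abs_le.2 ⟨by linarith, by linarith⟩⟩, fun hβ' => by linarith [(abs_le.1 hβ'.2).1]⟩
  have h1 : g 1 ≤ g α + 1 := by
    by_contra! h
    refine volume_Icc_sep_ne_zero hgc (u := g α + 1) (v := g α' + 1) hα' ⟨zero_le_one, le_rfl⟩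
      (by linarith) h (by linarith) (measure_mono_null ?_ hB)
    rintro β ⟨hβ, h₁, h₂⟩
    exact ⟨⟨hβ, abs_le.2 ⟨by linarith, by linarith⟩⟩, fun hβ' => by linarith [(abs_le.1 hβ'.2).2]⟩
  have hrange : ∀ β ∈ Icc (0:ℝ) 1, g 0 ≤ g β ∧ g β ≤ g 1 := fun β hβ =>
    ⟨hg ⟨le_rfl, zero_le_one⟩ hβ hβ.1, hg hβ ⟨zero_le_one, le_rfl⟩ hβ.2⟩
  constructor <;> refine nbhdHK_eq_Icc fun β hβ => abs_le.2 ⟨?_, ?_⟩ <;> linarith [hrange β hβ]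

theorem updateHK_lt_updateHK_or_nbhdHK_eq_Icc (hg : MonotoneOn g (Icc 0 1))
    (hgc : ContinuousOn g (Icc 0 1)) (hα : α ∈ Icc (0:ℝ) 1) (hα' : α' ∈ Icc (0:ℝ) 1)
    (hlt : g α < g α') (h₁ : volume {β ∈ Icc (0:ℝ) 1 | g β = g α + 1} = 0)
    (h₂ : volume {β ∈ Icc (0:ℝ) 1 | g β = g α' - 1} = 0) :
    updateHK g α < updateHK g α' ∨ nbhdHK g α = Icc 0 1 ∧ nbhdHK g α' = Icc 0 1 := by
  have h₀ := volume_nbhdHK_ne_zero hgc (f := g) (by simp) hα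
  have h₀' := volume_nbhdHK_ne_zero hgc (f := g) (by simp) hα'
  rcases le_or_gt 2 (g α' - g α) with hfar | hnear
  · exact Or.inl (calc updateHK g α < g α + 1 := updateHK_lt_add_one hg h₀ h₁
      _ ≤ g α' - 1 := by linarith
      _ < updateHK g α' := sub_one_lt_updateHK hg h₀' h₂)
  set N := nbhdHK g α
  set N' := nbhdHK g α'
  have hCI : N ∩ N' ⊆ Icc 0 1 := inter_subset_left.trans (nbhdHK_subset_Icc g α)
  have hC : volume (N ∩ N') ≠ 0 := by
    refine fun h0 => volume_Icc_sep_ne_zero hgc (u := g α' - 1) (v := g α + 1) hα hα'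
      (by linarith) (by linarith) (by linarith) (measure_mono_null (fun β ⟨hβ, h₁, h₂⟩ => ?_) h0)
    exact ⟨⟨hβ, abs_le.2 ⟨by linarith, by linarith⟩⟩, ⟨hβ, abs_le.2 ⟨by linarith, by linarith⟩⟩⟩
  have hc₁ : g α' - 1 < ⨍ β in N ∩ N', g β :=
    lt_setAverage_of_forall_le hC (volume_ne_top_of_subset_Icc hCI)
      (integrableOn_of_subset_Icc hg hCI) (fun β hβ => by linarith [(abs_le.1 hβ.2.2).1])
      (measure_sep_eq_zero_of_subset hCI h₂)
  have hc₂ : ⨍ β in N ∩ N', g β < g α + 1 :=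
    setAverage_lt_of_forall_le hC (volume_ne_top_of_subset_Icc hCI)
      (integrableOn_of_subset_Icc hg hCI) (fun β hβ => by linarith [(abs_le.1 hβ.1.2).2])
      (measure_sep_eq_zero_of_subset hCI h₁)
  rw [updateHK_eq_setAverage h₀, updateHK_eq_setAverage h₀']
  by_cases hA : volume (N \ N') = 0
  · by_cases hB : volume (N' \ N) = 0
    · exact Or.inr (nbhdHK_eq_Icc_of_volume_sdiff_eq_zero hg hgc hα hα' hlt hnear hA hB)
    exact Or.inl ((setAverage_nbhdHK_le_setAverage_inter hg hlt.le hC).trans_lt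
      (setAverage_inter_lt_setAverage_nbhdHK hg hlt.le hC hB hc₂))
  · exact Or.inl ((setAverage_nbhdHK_lt_setAverage_inter hg hlt.le hC hA hc₁).trans_le
      (setAverage_inter_le_setAverage_nbhdHK hg hlt.le hC))

end Comparison

section Continuity

variable {f g : ℝ → ℝ} {α α₀ : ℝ}

theorem abs_updateHK_sub_updateHK_le (hf : MonotoneOn f (Icc 0 1)) (hg : MonotoneOn g (Icc 0 1))
    {ε y M : ℝ} {s t : Set ℝ} (hfg : ∀ x ∈ Icc (0:ℝ) 1, |f x - g x| ≤ ε) (hs : MeasurableSet s)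
    (hs₀ : volume s ≠ 0) (ht : t ⊆ Icc 0 1) (hsf : s ⊆ nbhdHK f α) (hft : nbhdHK f α ⊆ t)
    (hsg : s ⊆ nbhdHK g α₀) (hgt : nbhdHK g α₀ ⊆ t) (hM : ∀ x ∈ t, |g x - y| ≤ M) :
    |updateHK f α - updateHK g α₀| ≤ ε + 4 * M * volume.real (t \ s) / volume.real s := by
  obtain ⟨x₀, hx₀⟩ := nonempty_of_measure_ne_zero hs₀
  have hM₀ : 0 ≤ M := (abs_nonneg _).trans (hM x₀ (hgt (hsg hx₀)))
  have hs₀' : 0 < volume.real s :=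
    ENNReal.toReal_pos hs₀ (volume_ne_top_of_subset_Icc ((hsg.trans hgt).trans ht))
  have hcompare : ∀ T ⊆ t, s ⊆ T → MeasurableSet T →
      |(⨍ β in T, g β) - ⨍ β in s, g β| ≤ 2 * M * volume.real (t \ s) / volume.real s :=
    fun T hTt hsT hT => by
      refine (abs_setAverage_sub_setAverage_le_of_subset hsT hs.nullMeasurableSet
        hT.nullMeasurableSet hs₀ (volume_ne_top_of_subset_Icc (hTt.trans ht))
        (integrableOn_of_subset_Icc hg (hTt.trans ht)) fun x hx => hM x (hTt hx)).trans ?_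
      gcongr
      exact volume_ne_top_of_subset_Icc (sdiff_subset.trans ht)
  have hN₀ : volume (nbhdHK f α) ≠ 0 := fun h => hs₀ (measure_mono_null hsf h)
  have hNI := nbhdHK_subset_Icc f α
  have h₁ := abs_le.1 (abs_setAverage_sub_setAverage_le hN₀ (volume_ne_top_of_subset_Icc hNI)
    (integrableOn_of_subset_Icc hf hNI) (integrableOn_of_subset_Icc hg hNI)
    fun x hx => hfg x (hNI hx))
  have h₂ := abs_le.1 (hcompare _ hft hsf (measurableSet_nbhdHK hf α))
  have h₃ := abs_le.1 (hcompare _ hgt hsg (measurableSet_nbhdHK hg α₀))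
  rw [updateHK_eq_setAverage hN₀, updateHK_eq_setAverage fun h => hs₀ (measure_mono_null hsg h),
    abs_le]
  rw [show 4 * M * volume.real (t \ s) / volume.real s
    = 2 * (2 * M * volume.real (t \ s) / volume.real s) by ring]
  constructor <;> linarith [h₁.1, h₁.2, h₂.1, h₂.2, h₃.1, h₃.2]

lemma exists_volume_real_annulus_lt (hg : MonotoneOn g (Icc 0 1)) {y θ : ℝ}
    (hnull : volume {β ∈ Icc (0:ℝ) 1 | |g β - y| = 1} = 0) (hθ : 0 < θ) :
    ∃ ζ ∈ Ioc (0:ℝ) (1 / 2), volume.real {β ∈ Icc (0:ℝ) 1 | |(|g β - y| - 1)| ≤ ζ} < θ := by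
  set W : ℝ → Set ℝ := fun ζ => {β ∈ Icc (0:ℝ) 1 | |(|g β - y| - 1)| ≤ ζ}
  have hW : ⋂ ζ > 0, W ζ = {β ∈ Icc (0:ℝ) 1 | |g β - y| = 1} := by
    ext β
    simp only [W, mem_iInter, mem_ofPred_eq]
    refine ⟨fun h => ⟨(h 1 one_pos).1, ?_⟩, fun ⟨hβ, h⟩ ζ hζ => ⟨hβ, by simp [h, hζ.le]⟩⟩
    by_contra hne
    have hpos : 0 < |(|g β - y| - 1)| := abs_pos.2 (sub_ne_zero.2 hne)
    linarith [(h _ (half_pos hpos)).2]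
  have htend := tendsto_measure_biInter_gt (μ := volume) (s := W) (a := 0)
    (fun r _ => (measurableSet_Icc_sep hg (p := fun z => |(|z - y| - 1)| ≤ r)
      (measurableSet_le (by fun_prop) measurable_const)).nullMeasurableSet)
    (fun _ _ _ hij _ hβ => ⟨hβ.1, hβ.2.trans hij⟩)
    ⟨1, one_pos, volume_ne_top_of_subset_Icc (sep_subset _ _)⟩
  rw [hW, hnull] at htend
  obtain ⟨ζ, hζW, hζ⟩ := ((htend.eventually (gt_mem_nhds (ENNReal.ofReal_pos.2 hθ))).and
    (Ioc_mem_nhdsGT (by norm_num : (0:ℝ) < 1 / 2))).exists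
  exact ⟨ζ, hζ, ENNReal.toReal_lt_of_lt_ofReal hζW⟩

lemma abs_updateHK_sub_updateHK_le_annulus (hf : MonotoneOn f (Icc 0 1))
    (hg : MonotoneOn g (Icc 0 1)) {η ζ : ℝ} (hηζ : 3 * η ≤ ζ) (hζ : ζ ≤ 1)
    (hfg : ∀ x ∈ Icc (0:ℝ) 1, |f x - g x| ≤ η) (hα : α ∈ Icc (0:ℝ) 1) (hαα₀ : |g α - g α₀| ≤ η)
    (h₀ : volume {β ∈ Icc (0:ℝ) 1 | |g β - g α₀| ≤ 1 - ζ} ≠ 0) :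
    |updateHK f α - updateHK g α₀| ≤
      η + 8 * volume.real {β ∈ Icc (0:ℝ) 1 | |(|g β - g α₀| - 1)| ≤ ζ}
        / volume.real {β ∈ Icc (0:ℝ) 1 | |g β - g α₀| ≤ 1 - ζ} := by
  set s := {β ∈ Icc (0:ℝ) 1 | |g β - g α₀| ≤ 1 - ζ}
  set t := {β ∈ Icc (0:ℝ) 1 | |g β - g α₀| ≤ 1 + ζ}
  have hmid := abs_le.1 hαα₀
  have hfα := abs_le.1 (hfg α hα)
  have hsf : s ⊆ nbhdHK f α := fun β ⟨hβ, h⟩ => by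
    have := abs_le.1 h
    have := abs_le.1 (hfg β hβ)
    exact ⟨hβ, abs_le.2 ⟨by linarith, by linarith⟩⟩
  have hft : nbhdHK f α ⊆ t := fun β ⟨hβ, h⟩ => by
    have := abs_le.1 h
    have := abs_le.1 (hfg β hβ)
    exact ⟨hβ, abs_le.2 ⟨by linarith, by linarith⟩⟩
  have hsg : s ⊆ nbhdHK g α₀ := fun β ⟨hβ, h⟩ => ⟨hβ, by linarith [abs_nonneg (f α - g α)]⟩
  have hgt : nbhdHK g α₀ ⊆ t := fun β ⟨hβ, h⟩ => ⟨hβ, by linarith [abs_nonneg (f α - g α)]⟩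
  have hts : volume.real (t \ s) ≤
      volume.real {β ∈ Icc (0:ℝ) 1 | |(|g β - g α₀| - 1)| ≤ ζ} := by
    refine measureReal_mono (fun β ⟨⟨hβ, h⟩, hs⟩ => ⟨hβ, abs_le.2 ⟨?_, by linarith⟩⟩)
      (volume_ne_top_of_subset_Icc (sep_subset _ _))
    by_contra! hlt
    exact hs ⟨hβ, by linarith⟩
  have hs₀ : 0 < volume.real s :=
    ENNReal.toReal_pos h₀ (volume_ne_top_of_subset_Icc (sep_subset _ _))
  calc |updateHK f α - updateHK g α₀|
      ≤ η + 4 * 2 * volume.real (t \ s) / volume.real s :=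
        abs_updateHK_sub_updateHK_le hf hg hfg (y := g α₀)
          (measurableSet_Icc_sep hg (p := fun z => |z - g α₀| ≤ 1 - ζ)
            (measurableSet_le (by fun_prop) measurable_const))
          h₀ (sep_subset _ _) hsf hft hsg hgt (fun β ⟨_, h⟩ => by linarith)
    _ ≤ _ := by rw [show (4:ℝ) * 2 = 8 by norm_num]; gcongr

lemma exists_abs_updateHK_sub_le (hg : MonotoneOn g (Icc 0 1)) (hgc : ContinuousOn g (Icc 0 1))
    (hα₀ : α₀ ∈ Icc (0:ℝ) 1) (hnull : volume {β ∈ Icc (0:ℝ) 1 | |g β - g α₀| = 1} = 0)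
    {δ : ℝ} (hδ : 0 < δ) :
    ∃ η > 0, ∀ f, MonotoneOn f (Icc 0 1) → (∀ x ∈ Icc (0:ℝ) 1, |f x - g x| ≤ η) →
      ∀ α ∈ Icc (0:ℝ) 1, |g α - g α₀| ≤ η → |updateHK f α - updateHK g α₀| ≤ δ := by
  set H := {β ∈ Icc (0:ℝ) 1 | g α₀ - 1 / 2 < g β ∧ g β < g α₀ + 1 / 2}
  have hH₀ : volume H ≠ 0 :=
    volume_Icc_sep_ne_zero hgc hα₀ hα₀ (by linarith) (by linarith) (by linarith)
  have hm : 0 < volume.real H :=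
    ENNReal.toReal_pos hH₀ (volume_ne_top_of_subset_Icc (sep_subset _ _))
  obtain ⟨ζ, ⟨hζ₀, hζ⟩, hW⟩ := exists_volume_real_annulus_lt hg hnull
    (θ := δ * volume.real H / 16) (by positivity)
  refine ⟨min (ζ / 3) (δ / 2), by positivity, fun f hf hfg α hα hαα₀ => ?_⟩
  have hHs : H ⊆ {β ∈ Icc (0:ℝ) 1 | |g β - g α₀| ≤ 1 - ζ} := fun β ⟨hβ, h₁, h₂⟩ =>
    ⟨hβ, abs_le.2 ⟨by linarith, by linarith⟩⟩
  calc |updateHK f α - updateHK g α₀|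
      ≤ min (ζ / 3) (δ / 2) + 8 * volume.real {β ∈ Icc (0:ℝ) 1 | |(|g β - g α₀| - 1)| ≤ ζ}
        / volume.real {β ∈ Icc (0:ℝ) 1 | |g β - g α₀| ≤ 1 - ζ} :=
        abs_updateHK_sub_updateHK_le_annulus hf hg (by linarith [min_le_left (ζ / 3) (δ / 2)])
          (by linarith) hfg hα hαα₀ fun h => hH₀ (measure_mono_null hHs h)
    _ ≤ δ / 2 + 8 * (δ * volume.real H / 16) / volume.real H := by
        gcongr
        · exact min_le_right _ _
        · exact volume_ne_top_of_subset_Icc (sep_subset _ _)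
    _ = δ := by field_simp; ring

theorem continuousOn_updateHK (hg : MonotoneOn g (Icc 0 1)) (hgc : ContinuousOn g (Icc 0 1))
    (hnull : ∀ α ∈ Icc (0:ℝ) 1, volume {β ∈ Icc (0:ℝ) 1 | |g β - g α| = 1} = 0) :
    ContinuousOn (updateHK g) (Icc 0 1) := by
  intro α₀ hα₀
  rw [Metric.continuousWithinAt_iff]
  intro δ hδ
  obtain ⟨η, hη, hU⟩ := exists_abs_updateHK_sub_le hg hgc hα₀ (hnull α₀ hα₀) (half_pos hδ)
  obtain ⟨ρ, hρ, hgρ⟩ := Metric.continuousWithinAt_iff.1 (hgc α₀ hα₀) η hη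
  refine ⟨ρ, hρ, fun α hα hαρ => ?_⟩
  have hgα : |g α - g α₀| ≤ η := (Real.dist_eq _ _ ▸ hgρ hα hαρ).le
  rw [Real.dist_eq]
  exact (hU g hg (fun x _ => by simp [hη.le]) α hα hgα).trans_lt (half_lt_self hδ)

variable {ι : Type*} {l : Filter ι} {F : ι → ℝ → ℝ}

theorem tendstoUniformlyOn_updateHK (hg : MonotoneOn g (Icc 0 1))
    (hgc : ContinuousOn g (Icc 0 1))
    (hnull : ∀ α ∈ Icc (0:ℝ) 1, volume {β ∈ Icc (0:ℝ) 1 | |g β - g α| = 1} = 0)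
    (hF : TendstoUniformlyOn F g l (Icc 0 1)) (hFm : ∀ᶠ i in l, MonotoneOn (F i) (Icc 0 1)) :
    TendstoUniformlyOn (fun i => updateHK (F i)) (updateHK g) l (Icc 0 1) := by
  rw [← tendstoLocallyUniformlyOn_iff_tendstoUniformlyOn_of_compact isCompact_Icc,
    Metric.tendstoLocallyUniformlyOn_iff]
  intro δ hδ α₀ hα₀
  obtain ⟨η, hη, hU⟩ := exists_abs_updateHK_sub_le hg hgc hα₀ (hnull α₀ hα₀)
    (by positivity : 0 < δ / 3)
  refine ⟨{α ∈ Icc (0:ℝ) 1 | |g α - g α₀| ≤ η}, ?_, ?_⟩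
  · filter_upwards [self_mem_nhdsWithin, hgc α₀ hα₀ (Metric.closedBall_mem_nhds (g α₀) hη)]
      with α hα hgα using ⟨hα, hgα⟩
  filter_upwards [hFm, Metric.tendstoUniformlyOn_iff.1 hF η hη] with i hmono hclose α hα
  have hFg : ∀ x ∈ Icc (0:ℝ) 1, |F i x - g x| ≤ η := fun x hx => by
    simpa [Real.dist_eq, abs_sub_comm] using (hclose x hx).le
  rw [Real.dist_eq]
  calc |updateHK g α - updateHK (F i) α|
      ≤ |updateHK g α - updateHK g α₀| + |updateHK (F i) α - updateHK g α₀| :=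
        (abs_sub_le _ (updateHK g α₀) _).trans_eq (by rw [abs_sub_comm (updateHK g α₀)])
    _ ≤ δ / 3 + δ / 3 := add_le_add (hU g hg (fun x _ => by simp [hη.le]) α hα.1 hα.2)
        (hU (F i) hmono hFg α hα.1 hα.2)
    _ < δ := by linarith

lemma eventually_monotoneOn_updateHK (hgc : ContinuousOn g (Icc 0 1))
    (hF : TendstoUniformlyOn F g l (Icc 0 1)) (hFm : ∀ᶠ i in l, MonotoneOn (F i) (Icc 0 1)) :
    ∀ᶠ i in l, MonotoneOn (updateHK (F i)) (Icc 0 1) := by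
  filter_upwards [hFm, Metric.tendstoUniformlyOn_iff.1 hF (1 / 4) (by norm_num)] with i hmono hclose
  have hFg : ∀ x ∈ Icc (0:ℝ) 1, |F i x - g x| ≤ 1 / 4 := fun x hx => by
    simpa [Real.dist_eq, abs_sub_comm] using (hclose x hx).le
  exact fun a ha b hb hab => updateHK_le_updateHK hmono (hmono ha hb hab)
    (volume_nbhdHK_ne_zero hgc hFg ha) (volume_nbhdHK_ne_zero hgc hFg hb)

end Continuity

section Symmetry

variable {g : ℝ → ℝ} {c α : ℝ}

lemma measurePreserving_one_sub : MeasurePreserving (fun x : ℝ => 1 - x) volume volume :=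
  Measure.measurePreserving_sub_left volume 1

lemma setAverage_preimage_one_sub {s : Set ℝ} (hs : MeasurableSet s) (f : ℝ → ℝ) :
    ⨍ x in (fun x => 1 - x) ⁻¹' s, f x = ⨍ x in s, f (1 - x) := by
  have hint := measurePreserving_one_sub.setIntegral_preimage_emb
    (Homeomorph.subLeft (1:ℝ)).measurableEmbedding (fun y => f (1 - y)) s
  simp only [sub_sub_cancel] at hint
  rw [setAverage_eq, setAverage_eq, measureReal_def, measureReal_def,
    measurePreserving_one_sub.measure_preimage hs.nullMeasurableSet, hint]

lemma nbhdHK_one_sub (hsym : ∀ x ∈ Icc (0:ℝ) 1, g x + g (1 - x) = 2 * c)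
    (hα : α ∈ Icc (0:ℝ) 1) : nbhdHK g (1 - α) = (fun x => 1 - x) ⁻¹' nbhdHK g α := by
  have hmem : ∀ x : ℝ, 1 - x ∈ Icc (0:ℝ) 1 ↔ x ∈ Icc (0:ℝ) 1 := fun x => by
    constructor <;> rintro ⟨h₁, h₂⟩ <;> constructor <;> linarith
  ext β
  simp only [nbhdHK, mem_preimage, mem_ofPred_eq, hmem]
  refine and_congr_right fun hβ => ?_
  have := hsym β hβ
  have := hsym α hα
  rw [abs_le, abs_le]
  constructor <;> rintro ⟨h₁, h₂⟩ <;> constructor <;> linarith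

lemma setAverage_one_sub_eq (hg : MonotoneOn g (Icc 0 1))
    (hsym : ∀ x ∈ Icc (0:ℝ) 1, g x + g (1 - x) = 2 * c) {s : Set ℝ} (hs : MeasurableSet s)
    (hsI : s ⊆ Icc 0 1) (hs₀ : volume s ≠ 0) :
    ⨍ x in s, g (1 - x) = 2 * c - ⨍ x in s, g x := by
  rw [setAverage_congr_fun hs (ae_of_all _ fun x hx => (show g (1 - x) = 2 * c - g x by
    linarith [hsym x (hsI hx)])), setAverage_const_sub hs₀ (volume_ne_top_of_subset_Icc hsI)
    (integrableOn_of_subset_Icc hg hsI)]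

lemma updateHK_one_sub (hg : MonotoneOn g (Icc 0 1))
    (hsym : ∀ x ∈ Icc (0:ℝ) 1, g x + g (1 - x) = 2 * c) (hα : α ∈ Icc (0:ℝ) 1)
    (h₀ : volume (nbhdHK g α) ≠ 0) : updateHK g (1 - α) = 2 * c - updateHK g α := by
  have hN := measurableSet_nbhdHK hg α
  have h₀' : volume (nbhdHK g (1 - α)) ≠ 0 := by
    rwa [nbhdHK_one_sub hsym hα, measurePreserving_one_sub.measure_preimage hN.nullMeasurableSet]
  rw [updateHK_eq_setAverage h₀', updateHK_eq_setAverage h₀, nbhdHK_one_sub hsym hα,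
    setAverage_preimage_one_sub hN, setAverage_one_sub_eq hg hsym hN (nbhdHK_subset_Icc g α) h₀]

lemma setAverage_Icc_eq (hg : MonotoneOn g (Icc 0 1))
    (hsym : ∀ x ∈ Icc (0:ℝ) 1, g x + g (1 - x) = 2 * c) : ⨍ x in Icc (0:ℝ) 1, g x = c := by
  have h := setAverage_preimage_one_sub (measurableSet_Icc (a := (0:ℝ)) (b := 1)) g
  rw [preimage_const_sub_Icc, sub_zero, sub_self,
    setAverage_one_sub_eq hg hsym measurableSet_Icc subset_rfl (by simp)] at h
  linarith

end Symmetry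

structure IsRegularProfile (g : ℝ → ℝ) (c : ℝ) : Prop where
  monotoneOn : MonotoneOn g (Icc 0 1)
  continuousOn : ContinuousOn g (Icc 0 1)
  add_apply_one_sub : ∀ x ∈ Icc (0:ℝ) 1, g x + g (1 - x) = 2 * c
  abs_sub_lt_one : ∀ y, volume {β ∈ Icc (0:ℝ) 1 | g β = y} ≠ 0 →
    ∀ β ∈ Icc (0:ℝ) 1, |g β - y| < 1

namespace IsRegularProfile

variable {g : ℝ → ℝ} {c α : ℝ}

lemma volume_level_eq_zero (hg : IsRegularProfile g c) (hα : α ∈ Icc (0:ℝ) 1) {y : ℝ}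
    (hy : 1 ≤ |g α - y|) : volume {β ∈ Icc (0:ℝ) 1 | g β = y} = 0 := by
  by_contra h
  exact (hg.abs_sub_lt_one y h α hα).not_ge hy

lemma volume_abs_sub_eq_one (hg : IsRegularProfile g c) (hα : α ∈ Icc (0:ℝ) 1) :
    volume {β ∈ Icc (0:ℝ) 1 | |g β - g α| = 1} = 0 := by
  refine measure_mono_null (fun β ⟨hβ, h⟩ => ?_) (measure_union_null
    (hg.volume_level_eq_zero hα (y := g α + 1) (by simp))
    (hg.volume_level_eq_zero hα (y := g α - 1) (by simp)))
  rcases (abs_eq zero_le_one).1 h with h | h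
  · exact Or.inl ⟨hβ, by linarith⟩
  · exact Or.inr ⟨hβ, by linarith⟩

lemma volume_nbhdHK_ne_zero (hg : IsRegularProfile g c) (hα : α ∈ Icc (0:ℝ) 1) :
    volume (nbhdHK g α) ≠ 0 :=
  HK.volume_nbhdHK_ne_zero hg.continuousOn (by simp) hα

lemma exists_nbhdHK_eq_Icc_of_volume_ne_zero (hg : IsRegularProfile g c) {x : ℝ}
    (hx : volume {β ∈ Icc (0:ℝ) 1 | updateHK g β = x} ≠ 0) :
    ∃ p ∈ Icc (0:ℝ) 1, updateHK g p = x ∧ nbhdHK g p = Icc 0 1 ∧ g 1 - g 0 < 2 := by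
  obtain ⟨p, hp, hpx⟩ := nonempty_of_measure_ne_zero hx
  by_cases hconst : ∀ q ∈ {β ∈ Icc (0:ℝ) 1 | updateHK g β = x}, g q = g p
  · have hlt := hg.abs_sub_lt_one (g p) fun h =>
      hx (measure_mono_null (fun q hq =>
        show q ∈ {β ∈ Icc (0:ℝ) 1 | g β = g p} from ⟨hq.1, hconst q hq⟩) h)
    refine ⟨p, hp, hpx, nbhdHK_eq_Icc fun β hβ => (hlt β hβ).le, ?_⟩
    linarith [abs_lt.1 (hlt 0 ⟨le_rfl, zero_le_one⟩), abs_lt.1 (hlt 1 ⟨zero_le_one, le_rfl⟩)]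
  push Not at hconst
  obtain ⟨q, ⟨hq, hqx⟩, hqp⟩ := hconst
  have hfull : ∀ a ∈ Icc (0:ℝ) 1, ∀ b ∈ Icc (0:ℝ) 1, g a < g b → updateHK g a = updateHK g b →
      nbhdHK g a = Icc 0 1 ∧ nbhdHK g b = Icc 0 1 := fun a ha b hb hlt heq =>
    (updateHK_lt_updateHK_or_nbhdHK_eq_Icc hg.monotoneOn hg.continuousOn ha hb hlt
      (hg.volume_level_eq_zero ha (by simp)) (hg.volume_level_eq_zero hb (by simp))).resolve_left
      heq.not_lt
  rcases hqp.lt_or_gt with hlt | hlt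
  · obtain ⟨hNq, hNp⟩ := hfull q hq p hp hlt (hqx.trans hpx.symm)
    exact ⟨p, hp, hpx, hNp, sub_lt_two_of_nbhdHK_eq_Icc hNq hNp hlt⟩
  · obtain ⟨hNp, hNq⟩ := hfull p hp q hq hlt (hpx.trans hqx.symm)
    exact ⟨p, hp, hpx, hNp, sub_lt_two_of_nbhdHK_eq_Icc hNp hNq hlt⟩

theorem updateHK (hg : IsRegularProfile g c) : IsRegularProfile (_root_.updateHK g) c where
  monotoneOn a ha b hb hab := updateHK_le_updateHK hg.monotoneOn (hg.monotoneOn ha hb hab)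
    (hg.volume_nbhdHK_ne_zero ha) (hg.volume_nbhdHK_ne_zero hb)
  continuousOn := continuousOn_updateHK hg.monotoneOn hg.continuousOn
    fun α hα => hg.volume_abs_sub_eq_one hα
  add_apply_one_sub x hx := by
    rw [updateHK_one_sub hg.monotoneOn hg.add_apply_one_sub hx (hg.volume_nbhdHK_ne_zero hx)]
    ring
  abs_sub_lt_one x hx β hβ := by
    obtain ⟨p, -, hpx, hNp, hdiam⟩ := hg.exists_nbhdHK_eq_Icc_of_volume_ne_zero hx
    rw [← hpx, updateHK_of_nbhdHK_eq_Icc hNp,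
      setAverage_Icc_eq hg.monotoneOn hg.add_apply_one_sub]
    have hsum := hg.add_apply_one_sub 0 ⟨le_rfl, zero_le_one⟩
    rw [sub_zero] at hsum
    have := updateHK_mem_Icc hg.monotoneOn (hg.volume_nbhdHK_ne_zero hβ)
    rw [abs_lt]
    constructor <;> linarith [this.1, this.2]

end IsRegularProfile

theorem tendstoUniformlyOn_iterate_updateHK {ι : Type*} {l : Filter ι} {F : ι → ℝ → ℝ}
    {g : ℝ → ℝ} {c : ℝ} (hg : IsRegularProfile g c) (hF : TendstoUniformlyOn F g l (Icc 0 1))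
    (hFm : ∀ᶠ i in l, MonotoneOn (F i) (Icc 0 1)) (t : ℕ) :
    TendstoUniformlyOn (fun i => updateHK^[t] (F i)) (updateHK^[t] g) l (Icc 0 1) := by
  induction t generalizing g F with
  | zero => simpa using hF
  | succ t ih =>
    simp only [Function.iterate_succ_apply]
    exact ih hg.updateHK (tendstoUniformlyOn_updateHK hg.monotoneOn hg.continuousOn
      (fun α hα => hg.volume_abs_sub_eq_one hα) hF hFm)
      (eventually_monotoneOn_updateHK hg.continuousOn hF hFm)

lemma isConsensusHK_of_tendstoUniformlyOn {ι : Type*} {l : Filter ι} [l.NeBot]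
    {F : ι → ℝ → ℝ} {g : ℝ → ℝ} (hF : TendstoUniformlyOn F g l (Icc 0 1))
    (h : ∀ᶠ i in l, IsConsensusHK (F i)) : IsConsensusHK g := fun a ha b hb =>
  tendsto_nhds_unique_of_eventuallyEq (hF.tendsto_at ha) (hF.tendsto_at hb)
    (h.mono fun _ hi => hi a ha b hb)

section Profiles

variable {n : ℕ} {L : ℝ}

lemma isRegularProfile_mul (hL : 0 < L) : IsRegularProfile (fun α => L * α) (L / 2) where
  monotoneOn _ _ _ _ hab := mul_le_mul_of_nonneg_left hab hL.le
  continuousOn := by fun_prop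
  add_apply_one_sub _ _ := by ring
  abs_sub_lt_one y hy := absurd (Set.Subsingleton.measure_zero
    (fun a ha b hb => mul_left_cancel₀ hL.ne' (ha.2.trans hb.2.symm)) volume) hy

lemma monotoneOn_eqSpacedHK (hn : 2 ≤ n) (hL : 0 ≤ L) :
    MonotoneOn (eqSpacedHK n L) (Icc 0 1) := by
  have hn' : (2:ℝ) ≤ n := by exact_mod_cast hn
  have hn₁ : (0:ℝ) ≤ n - 1 := by linarith
  intro a _ b _ hab
  simp only [eqSpacedHK]
  split_ifs with ha hb hb
  · exact le_rfl
  · have hbn : (1:ℝ) < b * n := by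
      rw [not_le, div_lt_iff₀ (by linarith)] at hb
      linarith
    have : (1:ℝ) ≤ ⌈b * n⌉ := by exact_mod_cast (Int.lt_ceil.2 (by exact_mod_cast hbn)).le
    exact div_nonneg (mul_nonneg (by linarith) hL) hn₁
  · exact absurd (hab.trans hb) ha
  · gcongr

lemma abs_eqSpacedHK_sub_le (hn : 2 ≤ n) (hL : 0 ≤ L) {α : ℝ} (hα : α ∈ Icc (0:ℝ) 1) :
    |eqSpacedHK n L α - L * α| ≤ L / n := by
  have hn' : (2:ℝ) ≤ n := by exact_mod_cast hn
  simp only [eqSpacedHK]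
  split_ifs with h
  · rw [zero_sub, abs_neg, abs_of_nonneg (mul_nonneg hL hα.1)]
    calc L * α ≤ L * (1 / n) := by gcongr
      _ = L / n := by ring
  have hin : (⌈α * n⌉ : ℝ) ≤ n := by
    exact_mod_cast Int.ceil_le.2 (by push_cast; nlinarith [hα.2])
  have hi₁ := Int.ceil_lt_add_one (α * n)
  have hi₂ := Int.le_ceil (α * n)
  set i : ℝ := (⌈α * n⌉ : ℝ)
  have hi : 0 ≤ i - 1 := by
    rw [not_le, div_lt_iff₀ (by linarith)] at h
    linarith
  have hv₁ : (i - 1) * L / n ≤ (i - 1) * L / (n - 1) :=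
    div_le_div_of_nonneg_left (mul_nonneg hi hL) (by linarith) (by linarith)
  have hv₂ : (i - 1) * L / (n - 1) ≤ i * L / n := by
    rw [div_le_div_iff₀ (by linarith) (by linarith)]
    nlinarith
  have hα₁ : (i - 1) * L / n ≤ L * α := by
    rw [div_le_iff₀ (by linarith)]
    nlinarith
  have hα₂ : L * α ≤ i * L / n := by
    rw [le_div_iff₀ (by linarith)]
    nlinarith
  have hstep : i * L / n - (i - 1) * L / n = L / n := by ring
  rw [abs_le]
  constructor <;> linarith

lemma tendstoUniformlyOn_eqSpacedHK (hL : 0 ≤ L) :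
    TendstoUniformlyOn (fun n => eqSpacedHK n L) (fun α => L * α) atTop (Icc 0 1) := by
  rw [Metric.tendstoUniformlyOn_iff]
  intro ε hε
  filter_upwards [eventually_ge_atTop 2,
    (tendsto_const_div_atTop_nhds_zero_nat L).eventually (gt_mem_nhds hε)] with n hn hLn α hα
  rw [Real.dist_eq, abs_sub_comm]
  exact (abs_eqSpacedHK_sub_le hn hL hα).trans_lt hLn

end Profiles

end HK

open HK

/-- for every `L > 0`, all sufficiently large equally spaced
profiles of diameter `L` reach consensus at a common time iff the canonical
linear profile `f^L(α) = Lα` reaches consensus at some time. -/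
theorem stmt12 (L : ℝ) (hL : 0 < L) :
    (∃ T N : ℕ, ∀ n : ℕ, 2 ≤ n → N ≤ n →
        IsConsensusHK (updateHK^[T] (eqSpacedHK n L))) ↔
      (∃ T' : ℕ, IsConsensusHK (updateHK^[T'] (fun α => L * α))) := by
  have hconv := tendstoUniformlyOn_iterate_updateHK (isRegularProfile_mul hL)
    (tendstoUniformlyOn_eqSpacedHK hL.le)
    (eventually_atTop.2 ⟨2, fun _ hn => monotoneOn_eqSpacedHK hn hL.le⟩)
  constructor
  · rintro ⟨T, N, hT⟩
    refine ⟨T, isConsensusHK_of_tendstoUniformlyOn (hconv T) ?_⟩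
    filter_upwards [eventually_ge_atTop N, eventually_ge_atTop 2] with n hN h2 using hT n h2 hN
  · rintro ⟨T, hT⟩
    obtain ⟨N, hN⟩ := eventually_atTop.1
      (Metric.tendstoUniformlyOn_iff.1 (hconv T) (1 / 2) (by norm_num))
    refine ⟨T + 1, N, fun n _ hn => ?_⟩
    rw [Function.iterate_succ_apply']
    refine isConsensusHK_updateHK fun α hα β hβ => ?_
    have hα' := abs_lt.1 (Real.dist_eq _ _ ▸ hN n hn α hα)
    have hβ' := abs_lt.1 (Real.dist_eq _ _ ▸ hN n hn β hβ)
    have := hT α hα β hβ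
    rw [abs_le]
    constructor <;> linarith
end

section
/- Regularity propagates along the dynamics: let f be a regular profile and t ∈ ℕ, and suppose D(U^s f) ≥ 2 for every natural number s < t. Then U^t f is a regular profile, with regularity bounds depending only on t and the regularity bounds of f. -/
open MeasureTheory Set

/-- `f` is `(m,M)`-regular on `S`: `m·|α-β| ≤ |f(α)-f(β)| ≤ M·|α-β|` on `S`. -/
def RegularOnHK (m M : ℝ) (f : ℝ → ℝ) (S : Set ℝ) : Prop :=
  ∀ α ∈ S, ∀ β ∈ S, m * |α - β| ≤ |f α - f β| ∧ |f α - f β| ≤ M * |α - β|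

namespace Stmt16Aux

/-- left endpoint of the neighbourhood -/
noncomputable def lo (f : ℝ → ℝ) (α : ℝ) : ℝ := sInf (nbhdHK f α)
/-- right endpoint of the neighbourhood -/
noncomputable def hi (f : ℝ → ℝ) (α : ℝ) : ℝ := sSup (nbhdHK f α)

variable {m M : ℝ} {f : ℝ → ℝ}

lemma self_mem {α : ℝ} (hα : α ∈ Icc (0:ℝ) 1) : α ∈ nbhdHK f α :=
  ⟨hα, by simp⟩

lemma reg_ordered (hf : MonotoneOn f (Icc 0 1)) (hreg : RegularOnHK m M f (Icc 0 1))
    {α β : ℝ} (hα : α ∈ Icc (0:ℝ) 1) (hβ : β ∈ Icc (0:ℝ) 1) (hab : α ≤ β) :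
    m * (β - α) ≤ f β - f α ∧ f β - f α ≤ M * (β - α) := by
  obtain ⟨h1, h2⟩ := hreg β hβ α hα
  have hmono := hf hα hβ hab
  rw [abs_of_nonneg (by linarith : (0:ℝ) ≤ f β - f α),
    abs_of_nonneg (by linarith : (0:ℝ) ≤ β - α)] at h1 h2
  exact ⟨h1, h2⟩

lemma contOn (hM : 0 < M) (hreg : RegularOnHK m M f (Icc 0 1)) :
    ContinuousOn f (Icc 0 1) := by
  have h : LipschitzOnWith (Real.toNNReal M) f (Icc 0 1) := by
    rw [lipschitzOnWith_iff_dist_le_mul]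
    intro x hx y hy
    rw [Real.dist_eq, Real.dist_eq, Real.coe_toNNReal M hM.le]
    exact (hreg x hx y hy).2
  exact h.continuousOn

lemma nbhd_closed (hM : 0 < M) (hreg : RegularOnHK m M f (Icc 0 1)) (α : ℝ) :
    IsClosed (nbhdHK f α) := by
  have hset : nbhdHK f α = Icc 0 1 ∩ f ⁻¹' (Icc (f α - 1) (f α + 1)) := by
    ext β
    simp only [nbhdHK, mem_setOf_eq, mem_inter_iff, mem_preimage, mem_Icc, abs_le]
    constructor
    · rintro ⟨h1, h2, h3⟩; exact ⟨h1, by linarith, by linarith⟩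
    · rintro ⟨h1, h2, h3⟩; exact ⟨h1, by linarith, by linarith⟩
  rw [hset]
  exact (contOn hM hreg).preimage_isClosed_of_isClosed isClosed_Icc isClosed_Icc

lemma lo_mem (hM : 0 < M) (hreg : RegularOnHK m M f (Icc 0 1)) {α : ℝ}
    (hα : α ∈ Icc (0:ℝ) 1) : lo f α ∈ nbhdHK f α :=
  (nbhd_closed hM hreg α).csInf_mem ⟨α, self_mem hα⟩ ⟨0, fun _ hx => hx.1.1⟩

lemma hi_mem (hM : 0 < M) (hreg : RegularOnHK m M f (Icc 0 1)) {α : ℝ}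
    (hα : α ∈ Icc (0:ℝ) 1) : hi f α ∈ nbhdHK f α :=
  (nbhd_closed hM hreg α).csSup_mem ⟨α, self_mem hα⟩ ⟨1, fun _ hx => hx.1.2⟩

lemma lo_le {α : ℝ} (hα : α ∈ Icc (0:ℝ) 1) : lo f α ≤ α :=
  csInf_le ⟨0, fun _ hx => hx.1.1⟩ (self_mem hα)

lemma le_hi {α : ℝ} (hα : α ∈ Icc (0:ℝ) 1) : α ≤ hi f α :=
  le_csSup ⟨1, fun _ hx => hx.1.2⟩ (self_mem hα)

lemma nbhd_eq (hM : 0 < M) (hf : MonotoneOn f (Icc 0 1))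
    (hreg : RegularOnHK m M f (Icc 0 1)) {α : ℝ} (hα : α ∈ Icc (0:ℝ) 1) :
    nbhdHK f α = Icc (lo f α) (hi f α) := by
  have hlm := lo_mem hM hreg hα
  have hhm := hi_mem hM hreg hα
  apply Subset.antisymm
  · intro x hx
    exact ⟨csInf_le ⟨0, fun _ hy => hy.1.1⟩ hx, le_csSup ⟨1, fun _ hy => hy.1.2⟩ hx⟩
  · rintro x ⟨hx1, hx2⟩
    have hxI : x ∈ Icc (0:ℝ) 1 := ⟨le_trans hlm.1.1 hx1, le_trans hx2 hhm.1.2⟩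
    refine ⟨hxI, ?_⟩
    have h1 : f (lo f α) ≤ f x := hf hlm.1 hxI hx1
    have h2 : f x ≤ f (hi f α) := hf hxI hhm.1 hx2
    have h3 := (abs_le.1 hlm.2).1
    have h4 := (abs_le.1 hhm.2).2
    rw [abs_le]
    constructor <;> linarith

lemma length_lb (hm : 0 < m) (hM : 0 < M) (hf : MonotoneOn f (Icc 0 1))
    (hreg : RegularOnHK m M f (Icc 0 1)) (hD : 2 ≤ f 1 - f 0) {α : ℝ}
    (hα : α ∈ Icc (0:ℝ) 1) : 1 / M ≤ hi f α - lo f α := by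
  have h0 : (0:ℝ) ∈ Icc (0:ℝ) 1 := ⟨le_refl 0, zero_le_one⟩
  have h1 : (1:ℝ) ∈ Icc (0:ℝ) 1 := ⟨zero_le_one, le_refl 1⟩
  have hMpos : (0:ℝ) < 1 / M := div_pos one_pos hM
  rcases le_or_gt 1 (f α - f 0) with hc | hc
  · have hMα : 1 ≤ M * α := by
      have h := (reg_ordered hf hreg h0 hα hα.1).2
      nlinarith
    have hγ0 : (0:ℝ) ≤ α - 1/M := by
      have : 1/M ≤ α := (div_le_iff₀ hM).2 (by linarith)
      linarith
    have hγI : α - 1/M ∈ Icc (0:ℝ) 1 := ⟨hγ0, by linarith [hα.2]⟩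
    have hle : α - 1/M ≤ α := by linarith
    have hb := (reg_ordered hf hreg hγI hα hle).2
    have he : α - (α - 1/M) = 1/M := by ring
    rw [he] at hb
    have hM1 : M * (1/M) = 1 := by field_simp
    have hmem : α - 1/M ∈ nbhdHK f α := by
      refine ⟨hγI, ?_⟩
      rw [abs_le]
      exact ⟨by linarith, by linarith [hf hγI hα hle]⟩
    have hlo : lo f α ≤ α - 1/M := csInf_le ⟨0, fun _ hx => hx.1.1⟩ hmem
    have hhi := le_hi (f := f) hα
    linarith
  · have hc' : 1 ≤ f 1 - f α := by linarith
    have hM1α : 1 ≤ M * (1 - α) := by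
      have h := (reg_ordered hf hreg hα h1 hα.2).2
      linarith
    have hγ1 : α + 1/M ≤ 1 := by
      have : 1/M ≤ 1 - α := (div_le_iff₀ hM).2 (by linarith)
      linarith
    have hγI : α + 1/M ∈ Icc (0:ℝ) 1 := ⟨by linarith [hα.1], hγ1⟩
    have hle : α ≤ α + 1/M := by linarith
    have hb := (reg_ordered hf hreg hα hγI hle).2
    have he : α + 1/M - α = 1/M := by ring
    rw [he] at hb
    have hM1 : M * (1/M) = 1 := by field_simp
    have hmem : α + 1/M ∈ nbhdHK f α := by
      refine ⟨hγI, ?_⟩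
      rw [abs_le]
      exact ⟨by linarith [hf hα hγI hle], by linarith⟩
    have hhi : α + 1/M ≤ hi f α := le_csSup ⟨1, fun _ hx => hx.1.2⟩ hmem
    have hlo := lo_le (f := f) hα
    linarith

lemma lo_char (hM : 0 < M) (hf : MonotoneOn f (Icc 0 1))
    (hreg : RegularOnHK m M f (Icc 0 1)) {α : ℝ} (hα : α ∈ Icc (0:ℝ) 1)
    (h : f 0 + 1 ≤ f α) : f (lo f α) = f α - 1 := by
  have hc : ContinuousOn f (Icc 0 α) := (contOn hM hreg).mono (Icc_subset_Icc le_rfl hα.2)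
  have hmem : f α - 1 ∈ Icc (f 0) (f α) := ⟨by linarith, by linarith⟩
  obtain ⟨γ, hγI, hγ⟩ := intermediate_value_Icc hα.1 hc hmem
  have hγI' : γ ∈ Icc (0:ℝ) 1 := ⟨hγI.1, le_trans hγI.2 hα.2⟩
  have hγmem : γ ∈ nbhdHK f α := ⟨hγI', by rw [hγ]; simp⟩
  have hlo : lo f α ≤ γ := csInf_le ⟨0, fun _ hx => hx.1.1⟩ hγmem
  have hlm := lo_mem hM hreg hα
  have h1 : f (lo f α) ≤ f γ := hf hlm.1 hγI' hlo
  have h2 := (abs_le.1 hlm.2).1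
  rw [hγ] at h1
  linarith

lemma lo_bdry {α : ℝ} (hα : α ∈ Icc (0:ℝ) 1) (hf : MonotoneOn f (Icc 0 1))
    (h : f α ≤ f 0 + 1) : lo f α = 0 := by
  have h0 : (0:ℝ) ∈ Icc (0:ℝ) 1 := ⟨le_refl 0, zero_le_one⟩
  have hmem : (0:ℝ) ∈ nbhdHK f α := by
    refine ⟨h0, ?_⟩
    rw [abs_le]
    exact ⟨by linarith, by linarith [hf h0 hα hα.1]⟩
  have h1 : lo f α ≤ 0 := csInf_le ⟨0, fun _ hx => hx.1.1⟩ hmem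
  have h2 : 0 ≤ lo f α := le_csInf ⟨α, self_mem hα⟩ fun x hx => hx.1.1
  linarith

lemma hi_char (hM : 0 < M) (hf : MonotoneOn f (Icc 0 1))
    (hreg : RegularOnHK m M f (Icc 0 1)) {α : ℝ} (hα : α ∈ Icc (0:ℝ) 1)
    (h : f α + 1 ≤ f 1) : f (hi f α) = f α + 1 := by
  have hc : ContinuousOn f (Icc α 1) := (contOn hM hreg).mono (Icc_subset_Icc hα.1 le_rfl)
  have hmem : f α + 1 ∈ Icc (f α) (f 1) := ⟨by linarith, by linarith⟩
  obtain ⟨γ, hγI, hγ⟩ := intermediate_value_Icc hα.2 hc hmem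
  have hγI' : γ ∈ Icc (0:ℝ) 1 := ⟨le_trans hα.1 hγI.1, hγI.2⟩
  have hγmem : γ ∈ nbhdHK f α := ⟨hγI', by rw [hγ]; simp⟩
  have hhi : γ ≤ hi f α := le_csSup ⟨1, fun _ hx => hx.1.2⟩ hγmem
  have hhm := hi_mem hM hreg hα
  have h1 : f γ ≤ f (hi f α) := hf hγI' hhm.1 hhi
  have h2 := (abs_le.1 hhm.2).2
  rw [hγ] at h1
  linarith

lemma hi_bdry {α : ℝ} (hα : α ∈ Icc (0:ℝ) 1) (hf : MonotoneOn f (Icc 0 1))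
    (h : f 1 ≤ f α + 1) : hi f α = 1 := by
  have h1I : (1:ℝ) ∈ Icc (0:ℝ) 1 := ⟨zero_le_one, le_refl 1⟩
  have hmem : (1:ℝ) ∈ nbhdHK f α := by
    refine ⟨h1I, ?_⟩
    rw [abs_le]
    exact ⟨by linarith [hf hα h1I hα.2], by linarith⟩
  have h1 : 1 ≤ hi f α := le_csSup ⟨1, fun _ hx => hx.1.2⟩ hmem
  have h2 : hi f α ≤ 1 := csSup_le ⟨α, self_mem hα⟩ fun x hx => hx.1.2
  linarith

lemma lo_mono (hM : 0 < M) (hf : MonotoneOn f (Icc 0 1))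
    (hreg : RegularOnHK m M f (Icc 0 1)) {α β : ℝ} (hα : α ∈ Icc (0:ℝ) 1)
    (hβ : β ∈ Icc (0:ℝ) 1) (hab : α ≤ β) : lo f α ≤ lo f β := by
  have hlβ := lo_mem hM hreg hβ
  rcases le_total α (lo f β) with h | h
  · exact le_trans (lo_le hα) h
  · have hmem : lo f β ∈ nbhdHK f α := by
      refine ⟨hlβ.1, ?_⟩
      have h1 : f (lo f β) ≤ f α := hf hlβ.1 hα h
      have h2 : f α ≤ f β := hf hα hβ hab
      have h3 := (abs_le.1 hlβ.2).1
      rw [abs_le]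
      exact ⟨by linarith, by linarith⟩
    exact csInf_le ⟨0, fun _ hx => hx.1.1⟩ hmem

lemma hi_mono (hM : 0 < M) (hf : MonotoneOn f (Icc 0 1))
    (hreg : RegularOnHK m M f (Icc 0 1)) {α β : ℝ} (hα : α ∈ Icc (0:ℝ) 1)
    (hβ : β ∈ Icc (0:ℝ) 1) (hab : α ≤ β) : hi f α ≤ hi f β := by
  have hhα := hi_mem hM hreg hα
  rcases le_total (hi f α) β with h | h
  · exact le_trans h (le_hi hβ)
  · have hmem : hi f α ∈ nbhdHK f β := by
      refine ⟨hhα.1, ?_⟩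
      have h1 : f β ≤ f (hi f α) := hf hβ hhα.1 h
      have h2 : f α ≤ f β := hf hα hβ hab
      have h3 := (abs_le.1 hhα.2).2
      rw [abs_le]
      exact ⟨by linarith, by linarith⟩
    exact le_csSup ⟨1, fun _ hx => hx.1.2⟩ hmem

/-- key lower estimate on the total displacement of the endpoints -/
lemma sum_lower (hm : 0 < m) (hM : 0 < M) (hf : MonotoneOn f (Icc 0 1))
    (hreg : RegularOnHK m M f (Icc 0 1)) (hD : 2 ≤ f 1 - f 0) {α β : ℝ}
    (hα : α ∈ Icc (0:ℝ) 1) (hβ : β ∈ Icc (0:ℝ) 1) (hab : α ≤ β) :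
    m * (β - α) ≤ M * ((lo f β - lo f α) + (hi f β - hi f α)) := by
  have hlα := lo_mem hM hreg hα
  have hlβ := lo_mem hM hreg hβ
  have hhα := hi_mem hM hreg hα
  have hhβ := hi_mem hM hreg hβ
  have hlmono := lo_mono hM hf hreg hα hβ hab
  have hhmono := hi_mono hM hf hreg hα hβ hab
  have hfab : f α ≤ f β := hf hα hβ hab
  have key : f β - f α ≤ (f (lo f β) - f (lo f α)) + (f (hi f β) - f (hi f α)) := by
    rcases le_or_gt (f 0 + 1) (f α) with h1 | h1
    · have h1' : f 0 + 1 ≤ f β := le_trans h1 hfab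
      rw [lo_char hM hf hreg hα h1, lo_char hM hf hreg hβ h1']
      have : f (hi f α) ≤ f (hi f β) := hf hhα.1 hhβ.1 hhmono
      linarith
    · rcases le_or_gt (f β + 1) (f 1) with h2 | h2
      · have h2' : f α + 1 ≤ f 1 := by linarith
        rw [hi_char hM hf hreg hα h2', hi_char hM hf hreg hβ h2]
        have : f (lo f α) ≤ f (lo f β) := hf hlα.1 hlβ.1 hlmono
        linarith
      · have hb : hi f β = 1 := hi_bdry hβ hf h2.le
        have ha : lo f α = 0 := lo_bdry hα hf h1.le
        have h3 : f α + 1 ≤ f 1 := by linarith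
        have h4 : f 0 + 1 ≤ f β := by linarith
        rw [hi_char hM hf hreg hα h3, lo_char hM hf hreg hβ h4, hb, ha]
        linarith
  have hA : f (lo f β) - f (lo f α) ≤ M * (lo f β - lo f α) :=
    (reg_ordered hf hreg hlα.1 hlβ.1 hlmono).2
  have hB : f (hi f β) - f (hi f α) ≤ M * (hi f β - hi f α) :=
    (reg_ordered hf hreg hhα.1 hhβ.1 hhmono).2
  have hm' := (reg_ordered hf hreg hα hβ hab).1
  linarith

/-- key upper estimate on the total displacement of the endpoints -/
lemma sum_upper (hm : 0 < m) (hM : 0 < M) (hf : MonotoneOn f (Icc 0 1))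
    (hreg : RegularOnHK m M f (Icc 0 1)) {α β : ℝ}
    (hα : α ∈ Icc (0:ℝ) 1) (hβ : β ∈ Icc (0:ℝ) 1) (hab : α ≤ β) :
    m * ((lo f β - lo f α) + (hi f β - hi f α)) ≤ 2 * (M * (β - α)) := by
  have hlα := lo_mem hM hreg hα
  have hlβ := lo_mem hM hreg hβ
  have hhα := hi_mem hM hreg hα
  have hhβ := hi_mem hM hreg hβ
  have hlmono := lo_mono hM hf hreg hα hβ hab
  have hhmono := hi_mono hM hf hreg hα hβ hab
  have hfab : f α ≤ f β := hf hα hβ hab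
  have keyA : f (lo f β) - f (lo f α) ≤ f β - f α := by
    rcases le_or_gt (f 0 + 1) (f α) with h1 | h1
    · rw [lo_char hM hf hreg hα h1, lo_char hM hf hreg hβ (le_trans h1 hfab)]
      linarith
    · rw [lo_bdry hα hf h1.le]
      rcases le_or_gt (f 0 + 1) (f β) with h2 | h2
      · rw [lo_char hM hf hreg hβ h2]; linarith
      · rw [lo_bdry hβ hf h2.le]; linarith
  have keyB : f (hi f β) - f (hi f α) ≤ f β - f α := by
    rcases le_or_gt (f β + 1) (f 1) with h2 | h2
    · rw [hi_char hM hf hreg hβ h2, hi_char hM hf hreg hα (by linarith)]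
      linarith
    · rw [hi_bdry hβ hf h2.le]
      rcases le_or_gt (f α + 1) (f 1) with h1 | h1
      · rw [hi_char hM hf hreg hα h1]; linarith
      · rw [hi_bdry hα hf h1.le]; linarith
  have hA : m * (lo f β - lo f α) ≤ f (lo f β) - f (lo f α) :=
    (reg_ordered hf hreg hlα.1 hlβ.1 hlmono).1
  have hB : m * (hi f β - hi f α) ≤ f (hi f β) - f (hi f α) :=
    (reg_ordered hf hreg hhα.1 hhβ.1 hhmono).1
  have hM' := (reg_ordered hf hreg hα hβ hab).2
  linarith

open intervalIntegral in
lemma int_affine (c d : ℝ) : ∫ s in (0:ℝ)..1, (c*s + d) = c/2 + d := by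
  rw [intervalIntegral.integral_add ((intervalIntegrable_id.const_mul c))
    (intervalIntegrable_const), intervalIntegral.integral_const_mul, integral_id]
  simp
  ring

/-- the update as an integral over `[0,1]` of the rescaled profile -/
lemma update_formula (hm : 0 < m) (hM : 0 < M) (hf : MonotoneOn f (Icc 0 1))
    (hreg : RegularOnHK m M f (Icc 0 1)) (hD : 2 ≤ f 1 - f 0) {α : ℝ}
    (hα : α ∈ Icc (0:ℝ) 1) :
    updateHK f α = ∫ s in (0:ℝ)..1, f ((hi f α - lo f α) * s + lo f α) := by
  set a := lo f α with ha
  set b := hi f α with hb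
  have hlen : 1/M ≤ b - a := length_lb hm hM hf hreg hD hα
  have hLpos : 0 < b - a := lt_of_lt_of_le (div_pos one_pos hM) hlen
  have hab : a ≤ b := by linarith
  have hset : nbhdHK f α = Icc a b := nbhd_eq hM hf hreg hα
  have hvol : (volume (nbhdHK f α)).toReal = b - a := by
    rw [hset, Real.volume_Icc, ENNReal.toReal_ofReal hLpos.le]
  have hint : ∫ β in nbhdHK f α, f β = ∫ x in a..b, f x := by
    rw [hset, MeasureTheory.integral_Icc_eq_integral_Ioc,
      intervalIntegral.integral_of_le hab]
  have hchg : ∫ s in (0:ℝ)..1, f ((b - a) * s + a)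
      = (b - a)⁻¹ • ∫ x in ((b-a)*0 + a)..((b-a)*1 + a), f x :=
    intervalIntegral.integral_comp_mul_add f hLpos.ne' a
  have e1 : (b-a)*0 + a = a := by ring
  have e2 : (b-a)*1 + a = b := by ring
  rw [e1, e2] at hchg
  rw [updateHK, if_pos (by rw [hvol]; exact hLpos), hvol, hint, hchg,
    smul_eq_mul, div_eq_inv_mul]

/-- the core two-sided estimate for the updated profile -/
lemma core (hm : 0 < m) (hM : 0 < M) (hf : MonotoneOn f (Icc 0 1))
    (hreg : RegularOnHK m M f (Icc 0 1)) (hD : 2 ≤ f 1 - f 0) {α β : ℝ}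
    (hα : α ∈ Icc (0:ℝ) 1) (hβ : β ∈ Icc (0:ℝ) 1) (hab : α ≤ β) :
    m^2/(2*M) * (β - α) ≤ updateHK f β - updateHK f α ∧
      updateHK f β - updateHK f α ≤ M^2/m * (β - α) := by
  have hlα := lo_mem hM hreg hα
  have hlβ := lo_mem hM hreg hβ
  have hhα := hi_mem hM hreg hα
  have hhβ := hi_mem hM hreg hβ
  have hlmono := lo_mono hM hf hreg hα hβ hab
  have hhmono := hi_mono hM hf hreg hα hβ hab
  have habα : lo f α ≤ hi f α := le_trans (lo_le hα) (le_hi hα)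
  have habβ : lo f β ≤ hi f β := le_trans (lo_le hβ) (le_hi hβ)
  set g1 : ℝ → ℝ := fun s => (hi f α - lo f α) * s + lo f α with hg1
  set g2 : ℝ → ℝ := fun s => (hi f β - lo f β) * s + lo f β with hg2
  have hg1c : Continuous g1 := by fun_prop
  have hg2c : Continuous g2 := by fun_prop
  have hg1mem : ∀ s ∈ Icc (0:ℝ) 1, g1 s ∈ Icc (0:ℝ) 1 := by
    intro s hs
    have h1 : 0 ≤ (hi f α - lo f α) * s := mul_nonneg (by linarith) hs.1
    have h2 : (hi f α - lo f α) * s ≤ hi f α - lo f α :=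
      mul_le_of_le_one_right (by linarith) hs.2
    exact ⟨by simp only [hg1]; linarith [hlα.1.1], by simp only [hg1]; linarith [hhα.1.2]⟩
  have hg2mem : ∀ s ∈ Icc (0:ℝ) 1, g2 s ∈ Icc (0:ℝ) 1 := by
    intro s hs
    have h1 : 0 ≤ (hi f β - lo f β) * s := mul_nonneg (by linarith) hs.1
    have h2 : (hi f β - lo f β) * s ≤ hi f β - lo f β :=
      mul_le_of_le_one_right (by linarith) hs.2
    exact ⟨by simp only [hg2]; linarith [hlβ.1.1], by simp only [hg2]; linarith [hhβ.1.2]⟩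
  have horder : ∀ s ∈ Icc (0:ℝ) 1, g1 s ≤ g2 s := by
    intro s hs
    simp only [hg1, hg2]
    nlinarith [mul_nonneg hs.1 (sub_nonneg.2 hhmono),
      mul_nonneg (sub_nonneg.2 hs.2) (sub_nonneg.2 hlmono)]
  have hcf := contOn hM hreg
  have hi1 : IntervalIntegrable (fun s => f (g1 s)) volume 0 1 := by
    apply ContinuousOn.intervalIntegrable
    rw [uIcc_of_le zero_le_one]
    exact hcf.comp hg1c.continuousOn hg1mem
  have hi2 : IntervalIntegrable (fun s => f (g2 s)) volume 0 1 := by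
    apply ContinuousOn.intervalIntegrable
    rw [uIcc_of_le zero_le_one]
    exact hcf.comp hg2c.continuousOn hg2mem
  have hdiff : updateHK f β - updateHK f α = ∫ s in (0:ℝ)..1, (f (g2 s) - f (g1 s)) := by
    rw [update_formula hm hM hf hreg hD hα, update_formula hm hM hf hreg hD hβ,
      intervalIntegral.integral_sub hi2 hi1]
  -- pointwise bounds
  have hpt : ∀ s ∈ Icc (0:ℝ) 1,
      m * (g2 s - g1 s) ≤ f (g2 s) - f (g1 s) ∧ f (g2 s) - f (g1 s) ≤ M * (g2 s - g1 s) :=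
    fun s hs => reg_ordered hf hreg (hg1mem s hs) (hg2mem s hs) (horder s hs)
  set c : ℝ := (hi f β - hi f α) - (lo f β - lo f α) with hc
  set d : ℝ := lo f β - lo f α with hd
  have hgdiff : ∀ s, g2 s - g1 s = c * s + d := by
    intro s; simp only [hg1, hg2, hc, hd]; ring
  have hSL := sum_lower hm hM hf hreg hD hα hβ hab
  have hSU := sum_upper hm hM hf hreg hα hβ hab
  constructor
  · have hmono1 : ∫ s in (0:ℝ)..1, (m * (c * s + d)) ≤ ∫ s in (0:ℝ)..1, (f (g2 s) - f (g1 s)) := by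
      apply intervalIntegral.integral_mono_on zero_le_one _ (hi2.sub hi1)
      · intro s hs
        rw [← hgdiff s]
        exact (hpt s hs).1
      · exact (Continuous.intervalIntegrable (by fun_prop) 0 1)
    have hval : ∫ s in (0:ℝ)..1, (m * (c * s + d)) = m * c / 2 + m * d := by
      have : ∀ s : ℝ, m * (c * s + d) = (m*c) * s + m*d := fun s => by ring
      simp_rw [this]
      rw [int_affine]
    rw [hdiff]
    rw [hval] at hmono1
    refine le_trans ?_ hmono1
    rw [div_mul_eq_mul_div, div_le_iff₀ (by positivity : (0:ℝ) < 2*M)]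
    simp only [hc, hd]
    nlinarith [mul_le_mul_of_nonneg_left hSL hm.le]
  · have hmono2 : ∫ s in (0:ℝ)..1, (f (g2 s) - f (g1 s)) ≤ ∫ s in (0:ℝ)..1, (M * (c * s + d)) := by
      apply intervalIntegral.integral_mono_on zero_le_one (hi2.sub hi1)
        (Continuous.intervalIntegrable (by fun_prop) 0 1)
      intro s hs
      rw [← hgdiff s]
      exact (hpt s hs).2
    have hval : ∫ s in (0:ℝ)..1, (M * (c * s + d)) = M * c / 2 + M * d := by
      have : ∀ s : ℝ, M * (c * s + d) = (M*c) * s + M*d := fun s => by ring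
      simp_rw [this]
      rw [int_affine]
    rw [hdiff]
    rw [hval] at hmono2
    refine le_trans hmono2 ?_
    rw [div_mul_eq_mul_div, le_div_iff₀ hm]
    simp only [hc, hd]
    nlinarith [mul_le_mul_of_nonneg_left hSU hM.le]

/-- one-step propagation of regularity -/
lemma step (hm : 0 < m) (hM : 0 < M) (hf : MonotoneOn f (Icc 0 1))
    (hreg : RegularOnHK m M f (Icc 0 1)) (hD : 2 ≤ f 1 - f 0) :
    MonotoneOn (updateHK f) (Icc 0 1) ∧
      RegularOnHK (m^2/(2*M)) (M^2/m) (updateHK f) (Icc 0 1) := by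
  have hm' : (0:ℝ) < m^2/(2*M) := by positivity
  constructor
  · intro α hα β hβ hab
    have h := (core hm hM hf hreg hD hα hβ hab).1
    nlinarith [mul_nonneg hm'.le (sub_nonneg.2 hab)]
  · intro α hα β hβ
    rcases le_total α β with h | h
    · obtain ⟨h1, h2⟩ := core hm hM hf hreg hD hα hβ h
      have e1 : |α - β| = β - α := by rw [abs_sub_comm]; exact abs_of_nonneg (by linarith)
      have e2 : |updateHK f α - updateHK f β| = updateHK f β - updateHK f α := by
        rw [abs_sub_comm]
        exact abs_of_nonneg (by nlinarith [mul_nonneg hm'.le (sub_nonneg.2 h)])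
      rw [e1, e2]
      exact ⟨h1, h2⟩
    · obtain ⟨h1, h2⟩ := core hm hM hf hreg hD hβ hα h
      have e1 : |α - β| = α - β := abs_of_nonneg (by linarith)
      have e2 : |updateHK f α - updateHK f β| = updateHK f α - updateHK f β := by
        exact abs_of_nonneg (by nlinarith [mul_nonneg hm'.le (sub_nonneg.2 h)])
      rw [e1, e2]
      exact ⟨h1, h2⟩

end Stmt16Aux

/-- regularity propagates along the dynamics: there are regularity
bounds `m', M'`, depending only on `t` and on `(m, M)`, such that any
`(m,M)`-regular profile `f` with `D(U^s f) ≥ 2` for all `s < t` has `U^t f` an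
`(m',M')`-regular profile. -/
theorem stmt16 (m M : ℝ) (hm : 0 < m) (hM : 0 < M) (t : ℕ) :
    ∃ m' M' : ℝ, 0 < m' ∧ 0 < M' ∧
      ∀ f : ℝ → ℝ, MonotoneOn f (Icc 0 1) → RegularOnHK m M f (Icc 0 1) →
        (∀ s : ℕ, s < t → 2 ≤ updateHK^[s] f 1 - updateHK^[s] f 0) →
        MonotoneOn (updateHK^[t] f) (Icc 0 1) ∧
          RegularOnHK m' M' (updateHK^[t] f) (Icc 0 1) := by
  induction t with
  | zero =>
    exact ⟨m, M, hm, hM, fun f hf hreg _ => by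
      simpa using And.intro hf hreg⟩
  | succ t ih =>
    obtain ⟨m', M', hm', hM', H⟩ := ih
    refine ⟨m'^2/(2*M'), M'^2/m', by positivity, by positivity, ?_⟩
    intro f hf hreg hD
    obtain ⟨hmono, hreg'⟩ := H f hf hreg (fun s hs => hD s (Nat.lt_succ_of_lt hs))
    have hD' : 2 ≤ updateHK^[t] f 1 - updateHK^[t] f 0 := hD t (Nat.lt_succ_self t)
    have hstep := Stmt16Aux.step hm' hM' hmono hreg' hD'
    rw [Function.iterate_succ']
    simpa using hstep
end

section
/- Central pinning for symmetric profiles: let f be a profile symmetric about 0, i.e. f(α) + f(1 − α) = 0 for Lebesgue-almost every α ∈ [0,1]. Then for every agent α ∈ N₀(f) ∩ N₁(f), one has N_α(f) = [0,1] and Uf(α) = 0. -/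
open MeasureTheory Set

/-! Since `f` is monotone, `f 0 ≤ f β ≤ f 1` on `[0,1]`, so an agent within distance 1 of both
endpoints sees everyone. Its update is then the mean of `f` over `[0,1]`, which vanishes because
the reflection `β ↦ 1 - β` preserves the integral while turning `f` into `-f` almost everywhere. -/

theorem intervalIntegral_eq_zero_of_ae_add_comp_sub_eq_zero {f : ℝ → ℝ} {a b : ℝ} (hab : a ≤ b)
    (hf : IntervalIntegrable f volume a b)
    (hsym : ∀ᵐ x ∂(volume.restrict (Icc a b)), f x + f (a + b - x) = 0) :
    ∫ x in a..b, f x = 0 := by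
  have hreflect : ∫ x in a..b, f (a + b - x) = ∫ x in a..b, f x := by
    simp [intervalIntegral.integral_comp_sub_left]
  have hsum : ∫ x in a..b, (f x + f (a + b - x)) = 0 := by
    rw [intervalIntegral.integral_of_le hab,
      integral_congr_ae (ae_restrict_of_ae_restrict_of_subset Ioc_subset_Icc_self hsym)]
    simp
  have hf' : IntervalIntegrable (fun x => f (a + b - x)) volume a b := by
    simpa using (hf.comp_sub_left (a + b)).symm
  rw [intervalIntegral.integral_add hf hf', hreflect] at hsum
  linarith

theorem nbhdHK_eq_Icc_of_mem_inter {f : ℝ → ℝ} (hf : MonotoneOn f (Icc 0 1)) {α : ℝ}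
    (hα : α ∈ nbhdHK f 0 ∩ nbhdHK f 1) : nbhdHK f α = Icc 0 1 := by
  obtain ⟨⟨-, h0⟩, ⟨-, h1⟩⟩ := hα
  rw [abs_le] at h0 h1
  refine subset_antisymm (fun β hβ => hβ.1) fun β hβ => ⟨hβ, abs_le.2 ⟨?_, ?_⟩⟩
  · linarith [hf (left_mem_Icc.2 zero_le_one) hβ hβ.1]
  · linarith [hf hβ (right_mem_Icc.2 zero_le_one) hβ.2]

theorem updateHK_eq_integral_of_nbhdHK_eq_Icc {f : ℝ → ℝ} {α : ℝ}
    (h : nbhdHK f α = Icc 0 1) : updateHK f α = ∫ β in Icc 0 1, f β := by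
  simp [updateHK, h, Real.volume_Icc]

/-- central pinning for symmetric profiles: if a profile `f` is
symmetric about `0`, then every agent `α ∈ N₀(f) ∩ N₁(f)` sees everyone,
`N_α(f) = [0,1]`, and `Uf(α) = 0`. -/
theorem stmt17 (f : ℝ → ℝ) (hf : MonotoneOn f (Icc 0 1))
    (hsym : ∀ᵐ α ∂(volume.restrict (Icc (0:ℝ) 1)), f α + f (1 - α) = 0) :
    ∀ α ∈ nbhdHK f 0 ∩ nbhdHK f 1,
      nbhdHK f α = Icc (0:ℝ) 1 ∧ updateHK f α = 0 := by
  intro α hα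
  have hN := nbhdHK_eq_Icc_of_mem_inter hf hα
  have hint : IntervalIntegrable f volume 0 1 :=
    MonotoneOn.intervalIntegrable (by rwa [uIcc_of_le zero_le_one])
  refine ⟨hN, ?_⟩
  rw [updateHK_eq_integral_of_nbhdHK_eq_Icc hN, integral_Icc_eq_integral_Ioc,
    ← intervalIntegral.integral_of_le zero_le_one]
  exact intervalIntegral_eq_zero_of_ae_add_comp_sub_eq_zero zero_le_one hint (by simpa using hsym)
end
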